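/- arXiv:1809.00622 — 5 statements merged into one kernel-verified Lean document; each statement's English description precedes it below -/
import Mathlib

section
/- Let N ≥ 3 and let |ψ⟩ be an entangled N-qubit pure state. If |ψ⟩ is fragile with respect to the loss of the k-th qubit, i.e., the reduced density operator ρ_{¬k}(ψ) is separable, then ρ_{¬k}(ψ) has rank exactly 2. -/
open scoped BigOperators ComplexConjugate

noncomputable section

/-- A single-qubit unit vector in `ℂ²`. -/
def IsUnitQubit (e : Fin 2 → ℂ) : Prop := ∑ j, Complex.normSq (e j) = 1

/-- Norm-one condition for a multiqubit vector on the register `ι`. -/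
def IsUnitState {ι : Type*} [Fintype ι] [DecidableEq ι] (ψ : (ι → Fin 2) → ℂ) : Prop :=
  ∑ x, Complex.normSq (ψ x) = 1

/-- The product state `⊗ᵢ eᵢ`. -/
def prodState {ι : Type*} [Fintype ι] (e : ι → Fin 2 → ℂ) : (ι → Fin 2) → ℂ :=
  fun x => ∏ i, e i (x i)

/-- A pure state is a product state if it is a tensor product of single-qubit unit vectors. -/
def IsProductState {ι : Type*} [Fintype ι] (ψ : (ι → Fin 2) → ℂ) : Prop :=
  ∃ e : ι → Fin 2 → ℂ, (∀ i, IsUnitQubit (e i)) ∧ ψ = prodState e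

/-- A pure state is entangled if it is not a product state. -/
def IsEntangledState {ι : Type*} [Fintype ι] (ψ : (ι → Fin 2) → ℂ) : Prop :=
  ¬ IsProductState ψ

/-- The projector `|v⟩⟨v|` as a matrix. -/
def proj {α : Type*} (v : α → ℂ) : Matrix α α ℂ :=
  Matrix.of fun x y => v x * conj (v y)

/-- A density matrix on the qubit register `ι` is separable if it is a finite convex
combination of projectors onto product states (and entangled otherwise). -/
def IsSeparableDensity {ι : Type*} [Fintype ι] (ρ : Matrix (ι → Fin 2) (ι → Fin 2) ℂ) : Prop :=
  ∃ (n : ℕ) (w : Fin n → ℝ) (e : Fin n → ι → Fin 2 → ℂ),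
    (∀ m, 0 ≤ w m) ∧ (∑ m, w m = 1) ∧ (∀ m i, IsUnitQubit (e m i)) ∧
    ρ = ∑ m, (w m : ℂ) • proj (prodState (e m))

/-- Assemble a full assignment of the `N` qubits from an assignment `x` of the qubits outside
`S` and an assignment `z` of the qubits in `S`. -/
def mergeCompl {N : ℕ} (S : Finset (Fin N)) (x : {i : Fin N // i ∉ S} → Fin 2)
    (z : {i : Fin N // i ∈ S} → Fin 2) : Fin N → Fin 2 :=
  fun i => if h : i ∈ S then z ⟨i, h⟩ else x ⟨i, h⟩

/-- The reduced density operator `ρ_{¬S}(ψ)`: the partial trace of `|ψ⟩⟨ψ|` over the qubits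
in `S`. -/
def reducedState {N : ℕ} (ψ : (Fin N → Fin 2) → ℂ) (S : Finset (Fin N)) :
    Matrix ({i : Fin N // i ∉ S} → Fin 2) ({i : Fin N // i ∉ S} → Fin 2) ℂ :=
  Matrix.of fun x y => ∑ z : {i : Fin N // i ∈ S} → Fin 2,
    ψ (mergeCompl S x z) * conj (ψ (mergeCompl S y z))


/-!
Write `ρ = ρ_{¬k}(ψ)` as `B Bᴴ`, where the two columns of `B` are the slices of `ψ` at the two
values of qubit `k`; hence `rank ρ = rank B ≤ 2`. If the rank were at most one, both slices
would be multiples of a single vector `v`, so `ρ` would annihilate `v^⊥`. In a convex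
decomposition `ρ = ∑ wₘ |eₘ⟩⟨eₘ|` the quadratic form `⟨a|ρ|a⟩ = ∑ wₘ |⟨eₘ|a⟩|²` then forces every
product state `eₘ` of positive weight to be orthogonal to `v^⊥`, i.e. a multiple of `v`. So `ψ`
would be a qubit state tensored with a product state, contradicting entanglement.
-/

open Complex Matrix
open scoped ComplexOrder

lemma Matrix.exists_eq_vecMulVec_of_rank_le_one {m n K : Type*} [Fintype n] [Field K]
    (B : Matrix m n K) (h : B.rank ≤ 1) : ∃ v d, B = vecMulVec v d := by
  rw [rank_eq_finrank_span_cols] at h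
  have := FiniteDimensional.span_of_finite K (Set.finite_range B.col)
  obtain ⟨v, hv⟩ := ((Submodule.finrank_le_one_iff_isPrincipal _).mp h).principal
  have hcol : ∀ j, ∃ c : K, c • v = B.col j := fun j =>
    Submodule.mem_span_singleton.mp (hv ▸ Submodule.subset_span (Set.mem_range_self j))
  choose d hd using hcol
  exact ⟨v, d, by ext i j; simpa [vecMulVec, mul_comm] using (congrFun (hd j) i).symm⟩

section Projectors

variable {α : Type*} [Fintype α]

lemma exists_eq_smul_of_forall_orthogonal {u v : α → ℂ}
    (h : ∀ a, star v ⬝ᵥ a = 0 → star u ⬝ᵥ a = 0) : ∃ t : ℂ, u = t • v := by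
  by_cases hv : v = 0
  · refine ⟨0, ?_⟩
    simpa [hv, dotProduct_star_self_eq_zero] using h u
  have hvv : star v ⬝ᵥ v ≠ 0 := dotProduct_star_self_eq_zero.not.mpr hv
  set t := (star v ⬝ᵥ u) / (star v ⬝ᵥ v)
  have hva : star v ⬝ᵥ (u - t • v) = 0 := by
    rw [dotProduct_sub, dotProduct_smul, smul_eq_mul, div_mul_cancel₀ _ hvv, sub_self]
  refine ⟨t, sub_eq_zero.mp (dotProduct_star_self_eq_zero.mp ?_)⟩
  rw [star_sub, sub_dotProduct, h _ hva, star_smul, smul_dotProduct, hva, smul_zero, sub_zero]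

lemma proj_mulVec (u a : α → ℂ) : proj u *ᵥ a = (star u ⬝ᵥ a) • u :=
  (vecMulVec_mulVec u (star u) a).trans (op_smul_eq_smul _ _)

lemma star_dotProduct_sum_smul_proj_mulVec {ι : Type*} [Fintype ι] (w : ι → ℝ)
    (u : ι → α → ℂ) (a : α → ℂ) :
    star a ⬝ᵥ ((∑ m, (w m : ℂ) • proj (u m)) *ᵥ a) =
      ((∑ m, w m * normSq (star (u m) ⬝ᵥ a) : ℝ) : ℂ) := by
  simp only [sum_mulVec, smul_mulVec, proj_mulVec, dotProduct_sum, dotProduct_smul, smul_eq_mul,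
    ofReal_sum, ofReal_mul, normSq_eq_conj_mul_self]
  refine Finset.sum_congr rfl fun m _ => ?_
  rw [star_dotProduct a (u m), Complex.star_def]
  ring

lemma star_dotProduct_eq_zero_of_sum_smul_proj_mulVec_eq_zero {ι : Type*} [Fintype ι]
    {w : ι → ℝ} (hw : ∀ m, 0 ≤ w m) {u : ι → α → ℂ} {a : α → ℂ}
    (ha : (∑ m, (w m : ℂ) • proj (u m)) *ᵥ a = 0) {m : ι} (hm : 0 < w m) :
    star (u m) ⬝ᵥ a = 0 := by
  have h := star_dotProduct_sum_smul_proj_mulVec w u a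
  rw [ha, dotProduct_zero, eq_comm, ofReal_eq_zero,
    Finset.sum_eq_zero_iff_of_nonneg fun m _ => mul_nonneg (hw m) (normSq_nonneg _)] at h
  simpa [hm.ne'] using h m (Finset.mem_univ m)

end Projectors

section ProductStates

variable {ι : Type*} [Fintype ι]

lemma sum_normSq_prodState [DecidableEq ι] (e : ι → Fin 2 → ℂ) :
    ∑ x, normSq (prodState e x) = ∏ i, ∑ j, normSq (e i j) := by
  simp only [prodState, map_prod]
  rw [Finset.prod_univ_sum, Fintype.piFinset_univ]

lemma prodState_ne_zero [DecidableEq ι] {e : ι → Fin 2 → ℂ} (he : ∀ i, IsUnitQubit (e i)) :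
    prodState e ≠ 0 := by
  intro h
  simpa [h, show ∀ i, ∑ j, normSq (e i j) = 1 from he] using sum_normSq_prodState e

lemma eq_prodState_of_unique [Unique ι] (g : (ι → Fin 2) → ℂ) :
    g = prodState fun _ j => g fun _ => j := by
  funext z
  simp only [prodState, Fintype.prod_unique]
  congr 1
  funext i
  rw [Unique.eq_default i]

lemma IsProductState.of_eq_prodState [DecidableEq ι] {ψ : (ι → Fin 2) → ℂ}
    (hψ : IsUnitState ψ) (E : ι → Fin 2 → ℂ) (h : ψ = prodState E) : IsProductState ψ := by
  set r : ι → ℝ := fun i => √(∑ j, normSq (E i j))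
  have hr : ∏ i, r i = 1 := by
    rw [← Real.sqrt_prod _ fun i _ => Finset.sum_nonneg fun j _ => normSq_nonneg _,
      ← sum_normSq_prodState, ← h, hψ, Real.sqrt_one]
  have hr0 : ∀ i, r i ≠ 0 := fun i => Finset.prod_ne_zero_iff.mp (hr ▸ one_ne_zero) i
    (Finset.mem_univ i)
  refine ⟨fun i j => (r i : ℂ)⁻¹ * E i j, fun i => ?_, ?_⟩
  · have hsq : r i * r i = ∑ j, normSq (E i j) :=
      Real.mul_self_sqrt (Finset.sum_nonneg fun j _ => normSq_nonneg _)
    simp only [IsUnitQubit, normSq_mul, normSq_inv, normSq_ofReal, ← Finset.mul_sum, ← hsq]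
    exact inv_mul_cancel₀ (mul_self_ne_zero.mpr (hr0 i))
  · funext x
    rw [h, prodState, prodState, Finset.prod_mul_distrib, Finset.prod_inv_distrib, ← ofReal_prod,
      hr, ofReal_one, inv_one, one_mul]

end ProductStates

section MergeCompl

variable {N : ℕ} (S : Finset (Fin N))

lemma mergeCompl_restrict (w : Fin N → Fin 2) :
    mergeCompl S (fun i => w i) (fun i => w i) = w := by
  funext i
  unfold mergeCompl
  split <;> rfl

lemma prodState_mergeCompl (c : {i // i ∈ S} → Fin 2 → ℂ) (e : {i // i ∉ S} → Fin 2 → ℂ)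
    (x : {i // i ∉ S} → Fin 2) (z : {i // i ∈ S} → Fin 2) :
    prodState (fun i => if h : i ∈ S then c ⟨i, h⟩ else e ⟨i, h⟩) (mergeCompl S x z) =
      prodState c z * prodState e x := by
  rw [prodState, prodState, prodState, ← Finset.prod_mul_prod_compl S, ← Finset.prod_coe_sort S,
    Finset.prod_subtype Sᶜ (p := (· ∉ S)) fun i => Finset.mem_compl]
  congr 1 <;> refine Fintype.prod_congr _ _ fun i => ?_
  · simp [mergeCompl, i.2]
  · have hi : (i : Fin N) ∉ S := i.2
    simp [mergeCompl, hi]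

end MergeCompl

section ReducedState

variable {N : ℕ} (ψ : (Fin N → Fin 2) → ℂ) (S : Finset (Fin N))

def sliceMatrix : Matrix ({i // i ∉ S} → Fin 2) ({i // i ∈ S} → Fin 2) ℂ :=
  Matrix.of fun x z => ψ (mergeCompl S x z)

lemma reducedState_eq_sliceMatrix_mul_conjTranspose :
    reducedState ψ S = sliceMatrix ψ S * (sliceMatrix ψ S)ᴴ := by
  ext x y
  simp [reducedState, sliceMatrix, Matrix.mul_apply]

lemma rank_reducedState_le : (reducedState ψ S).rank ≤ 2 ^ S.card := by
  rw [reducedState_eq_sliceMatrix_mul_conjTranspose, rank_self_mul_conjTranspose]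
  simpa using (sliceMatrix ψ S).rank_le_card_width

lemma exists_mergeCompl_eq_mul_of_rank_le_one (hsep : IsSeparableDensity (reducedState ψ S))
    (hrank : (reducedState ψ S).rank ≤ 1) :
    ∃ (e : {i // i ∉ S} → Fin 2 → ℂ) (g : ({i // i ∈ S} → Fin 2) → ℂ),
      ∀ x z, ψ (mergeCompl S x z) = g z * prodState e x := by
  obtain ⟨n, w, e, hw, hsum, he, hρ⟩ := hsep
  obtain ⟨v, d, hslice⟩ := (sliceMatrix ψ S).exists_eq_vecMulVec_of_rank_le_one <| by
    rwa [← rank_self_mul_conjTranspose, ← reducedState_eq_sliceMatrix_mul_conjTranspose]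
  obtain ⟨m, hm⟩ : ∃ m, 0 < w m := by
    by_contra! h
    have := Finset.sum_nonpos fun m (_ : m ∈ Finset.univ) => h m
    linarith
  have hker : ∀ a, star v ⬝ᵥ a = 0 → reducedState ψ S *ᵥ a = 0 := fun a ha => by
    rw [reducedState_eq_sliceMatrix_mul_conjTranspose, hslice, ← mulVec_mulVec,
      conjTranspose_vecMulVec, vecMulVec_mulVec (star d), ha]
    simp
  obtain ⟨t, ht⟩ := exists_eq_smul_of_forall_orthogonal fun a ha =>
    star_dotProduct_eq_zero_of_sum_smul_proj_mulVec_eq_zero hw (hρ ▸ hker a ha) hm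
  have ht0 : t ≠ 0 := by
    rintro rfl
    exact prodState_ne_zero (he m) (by simpa using ht)
  refine ⟨e m, fun z => t⁻¹ * d z, fun x z => ?_⟩
  have hxz : ψ (mergeCompl S x z) = v x * d z := congrFun (congrFun hslice x) z
  rw [hxz, ht, Pi.smul_apply, smul_eq_mul]
  field_simp

end ReducedState

theorem fragile_implies_rank_two_general {N : ℕ}
    (ψ : (Fin N → Fin 2) → ℂ) (hunit : IsUnitState ψ) (hent : IsEntangledState ψ)
    (k : Fin N) (hfrag : IsSeparableDensity (reducedState ψ ({k} : Finset (Fin N)))) :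
    (reducedState ψ ({k} : Finset (Fin N))).rank = 2 := by
  have hle : (reducedState ψ {k}).rank ≤ 2 := by simpa using rank_reducedState_le ψ {k}
  have hgt : ¬ (reducedState ψ {k}).rank ≤ 1 := fun hrank => by
    obtain ⟨e, g, hψ⟩ := exists_mergeCompl_eq_mul_of_rank_le_one ψ {k} hfrag hrank
    set c : ({k} : Finset (Fin N)) → Fin 2 → ℂ := fun _ j => g fun _ => j
    refine hent (.of_eq_prodState hunit (fun i => if h : i ∈ {k} then c ⟨i, h⟩ else e ⟨i, h⟩) ?_)
    funext w
    rw [← mergeCompl_restrict {k} w, hψ, prodState_mergeCompl, ← eq_prodState_of_unique g]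
  omega

/-- If an entangled `N`-qubit pure state (`N ≥ 3`) is fragile with respect to
the loss of the `k`-th qubit (i.e. `ρ_{¬k}(ψ)` is separable), then `ρ_{¬k}(ψ)` has rank 2. -/
theorem fragile_implies_rank_two {N : ℕ} (hN : 3 ≤ N)
    (ψ : (Fin N → Fin 2) → ℂ) (hunit : IsUnitState ψ) (hent : IsEntangledState ψ)
    (k : Fin N) (hfrag : IsSeparableDensity (reducedState ψ ({k} : Finset (Fin N)))) :
    (reducedState ψ ({k} : Finset (Fin N))).rank = 2 :=
  fragile_implies_rank_two_general ψ hunit hent k hfrag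
end
end

section
/- Let N ≥ 3, let A ⊆ {1,…,N} be nonempty, let 0 < p < 1, and let |e_i⟩, |e'_i⟩ (i = 1,…,N) be single-qubit unit vectors such that ⟨e_i|e'_i⟩ = 0 for every i ∈ A and such that, if A has exactly one element, there is at least one j ∉ A for which |e'_j⟩ and |e_j⟩ are linearly independent. Then the vector |ψ⟩ = √p |e_1,…,e_N⟩ + √(1−p) |e'_1,…,e'_N⟩ is a unit vector, |ψ⟩ is entangled, and for every k ∈ A the reduced density operator ρ_{¬k}(ψ) is separable; i.e., |ψ⟩ is fragile with respect to the loss of any qubit in A. -/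
open scoped BigOperators ComplexConjugate

noncomputable section

lemma unit_exists_ne_zero {u : Fin 2 → ℂ} (hu : IsUnitQubit u) : ∃ j, u j ≠ 0 := by
  by_contra h
  push_neg at h
  have : (∑ j, Complex.normSq (u j)) = 0 := by simp [h]
  rw [IsUnitQubit] at hu
  simp [this] at hu

lemma unit_inner_self {u : Fin 2 → ℂ} (hu : IsUnitQubit u) :
    ∑ j, conj (u j) * u j = 1 := by
  have : ∀ j : Fin 2, conj (u j) * u j = (Complex.normSq (u j) : ℂ) := by
    intro j; rw [Complex.normSq_eq_conj_mul_self]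
  rw [Finset.sum_congr rfl fun j _ => this j, ← Complex.ofReal_sum, hu, Complex.ofReal_one]

lemma orth_wedge_ne_zero {u v : Fin 2 → ℂ} (hu : IsUnitQubit u) (hv : IsUnitQubit v)
    (h : ∑ j, conj (u j) * v j = 0) : u 0 * v 1 - u 1 * v 0 ≠ 0 := by
  intro hw
  have hu' : conj (u 0) * u 0 + conj (u 1) * u 1 = 1 := by
    have := unit_inner_self hu; rwa [Fin.sum_univ_two] at this
  have h' : conj (u 0) * v 0 + conj (u 1) * v 1 = 0 := by
    rwa [Fin.sum_univ_two] at h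
  have hv0 : v 0 = 0 := by
    linear_combination u 0 * h' - conj (u 1) * hw - v 0 * hu'
  have hv1 : v 1 = 0 := by
    linear_combination u 1 * h' + conj (u 0) * hw - v 1 * hu'
  rw [IsUnitQubit, Fin.sum_univ_two, hv0, hv1] at hv
  simp at hv

lemma linIndep_wedge_ne_zero {u v : Fin 2 → ℂ} (h : LinearIndependent ℂ ![u, v]) :
    u 0 * v 1 - u 1 * v 0 ≠ 0 := by
  intro hw
  have hu : u ≠ 0 := by
    have := h.ne_zero 0; simpa using this
  have hcase : u 0 ≠ 0 ∨ u 1 ≠ 0 := by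
    by_contra hc; push_neg at hc
    exact hu (funext fun m => by fin_cases m <;> simp [hc.1, hc.2])
  rcases hcase with hj | hj
  · have key := (LinearIndependent.pair_iff.mp h) (v 0) (-(u 0))
    have hz : v 0 • u + (-(u 0)) • v = 0 := by
      funext m
      simp only [Pi.add_apply, Pi.smul_apply, smul_eq_mul, neg_mul, Pi.zero_apply]
      fin_cases m
      · show v 0 * u 0 + -(u 0 * v 0) = 0; ring
      · show v 0 * u 1 + -(u 0 * v 1) = 0; linear_combination -hw
    exact hj (by simpa using (key hz).2)
  · have key := (LinearIndependent.pair_iff.mp h) (v 1) (-(u 1))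
    have hz : v 1 • u + (-(u 1)) • v = 0 := by
      funext m
      simp only [Pi.add_apply, Pi.smul_apply, smul_eq_mul, neg_mul, Pi.zero_apply]
      fin_cases m
      · show v 1 * u 0 + -(u 1 * v 0) = 0; linear_combination hw
      · show v 1 * u 1 + -(u 1 * v 1) = 0; ring
    exact hj (by simpa using (key hz).2)

lemma sum_fun_prod {ι : Type*} [Fintype ι] [DecidableEq ι] (f : ι → Fin 2 → ℂ) :
    ∑ x : ι → Fin 2, ∏ i, f i (x i) = ∏ i, ∑ j, f i j := by
  rw [Finset.prod_univ_sum, Fintype.piFinset_univ]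

lemma prod_inner {ι : Type*} [Fintype ι] [DecidableEq ι] (f g : ι → Fin 2 → ℂ) :
    ∑ x : ι → Fin 2, conj (prodState f x) * prodState g x
      = ∏ i, ∑ j, conj (f i j) * g i j := by
  have : ∀ x : ι → Fin 2, conj (prodState f x) * prodState g x
      = ∏ i, (conj (f i (x i)) * g i (x i)) := by
    intro x
    rw [prodState, prodState, map_prod, ← Finset.prod_mul_distrib]
  rw [Finset.sum_congr rfl fun x _ => this x]
  exact sum_fun_prod fun i j => conj (f i j) * g i j

theorem unit_aux {N : ℕ} (hN : 3 ≤ N)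
    (A : Finset (Fin N)) (hA : A.Nonempty)
    (p : ℝ) (hp0 : 0 < p) (hp1 : p < 1)
    (e e' : Fin N → Fin 2 → ℂ)
    (he : ∀ i, IsUnitQubit (e i)) (he' : ∀ i, IsUnitQubit (e' i))
    (horth : ∀ i ∈ A, ∑ j, conj (e i j) * e' i j = 0)
    (ψ : (Fin N → Fin 2) → ℂ)
    (hψ : ψ = fun x => (Real.sqrt p : ℂ) * prodState e x
        + (Real.sqrt (1 - p) : ℂ) * prodState e' x) :
    ∑ x, Complex.normSq (ψ x) = 1 := by
  obtain ⟨k, hk⟩ := hA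
  have h1 : ∑ x : Fin N → Fin 2, conj (prodState e x) * prodState e x = 1 := by
    rw [prod_inner]
    exact Finset.prod_eq_one fun i _ => unit_inner_self (he i)
  have h2 : ∑ x : Fin N → Fin 2, conj (prodState e' x) * prodState e' x = 1 := by
    rw [prod_inner]
    exact Finset.prod_eq_one fun i _ => unit_inner_self (he' i)
  have h3 : ∑ x : Fin N → Fin 2, conj (prodState e x) * prodState e' x = 0 := by
    rw [prod_inner]
    exact Finset.prod_eq_zero (Finset.mem_univ k) (horth k hk)
  have h4 : ∑ x : Fin N → Fin 2, conj (prodState e' x) * prodState e x = 0 := by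
    rw [prod_inner]
    apply Finset.prod_eq_zero (Finset.mem_univ k)
    have := congrArg conj (horth k hk)
    simpa [map_sum, mul_comm] using this
  have key : (∑ x : Fin N → Fin 2, (Complex.normSq (ψ x) : ℂ)) = 1 := by
    have hterm : ∀ x : Fin N → Fin 2, (Complex.normSq (ψ x) : ℂ)
        = (Real.sqrt p : ℂ) * (Real.sqrt p : ℂ) * (conj (prodState e x) * prodState e x)
          + ((Real.sqrt p : ℂ) * (Real.sqrt (1-p) : ℂ) * (conj (prodState e x) * prodState e' x)
          + ((Real.sqrt (1-p) : ℂ) * (Real.sqrt p : ℂ) * (conj (prodState e' x) * prodState e x)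
          + (Real.sqrt (1-p) : ℂ) * (Real.sqrt (1-p) : ℂ) * (conj (prodState e' x) * prodState e' x))) := by
      intro x
      rw [Complex.normSq_eq_conj_mul_self, hψ]
      simp only [map_add, map_mul, Complex.conj_ofReal]
      ring
    rw [Finset.sum_congr rfl fun x _ => hterm x]
    rw [Finset.sum_add_distrib, Finset.sum_add_distrib, Finset.sum_add_distrib,
      ← Finset.mul_sum, ← Finset.mul_sum, ← Finset.mul_sum, ← Finset.mul_sum,
      h1, h2, h3, h4]
    rw [mul_one, mul_zero, mul_zero, mul_one, ← Complex.ofReal_mul, ← Complex.ofReal_mul,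
      Real.mul_self_sqrt hp0.le, Real.mul_self_sqrt (by linarith : (0:ℝ) ≤ 1 - p)]
    push_cast
    ring
  have := key
  rw [← Complex.ofReal_sum] at this
  exact_mod_cast this

theorem ent_test {N : ℕ} (hN : 3 ≤ N)
    (A : Finset (Fin N)) (hA : A.Nonempty)
    (p : ℝ) (hp0 : 0 < p) (hp1 : p < 1)
    (e e' : Fin N → Fin 2 → ℂ)
    (he : ∀ i, IsUnitQubit (e i)) (he' : ∀ i, IsUnitQubit (e' i))
    (horth : ∀ i ∈ A, ∑ j, conj (e i j) * e' i j = 0)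
    (hsing : A.card = 1 → ∃ j ∉ A, LinearIndependent ℂ ![e j, e' j])
    (ψ : (Fin N → Fin 2) → ℂ)
    (hψ : ψ = fun x => (Real.sqrt p : ℂ) * prodState e x
        + (Real.sqrt (1 - p) : ℂ) * prodState e' x) :
    ¬ ∃ f : Fin N → Fin 2 → ℂ, (∀ i, IsUnitQubit (f i)) ∧ ψ = prodState f := by
  obtain ⟨k, hk⟩ := hA
  have hwk : e k 0 * e' k 1 - e k 1 * e' k 0 ≠ 0 :=
    orth_wedge_ne_zero (he k) (he' k) (horth k hk)
  obtain ⟨l, hlk, hwl⟩ : ∃ l, l ≠ k ∧ e l 0 * e' l 1 - e l 1 * e' l 0 ≠ 0 := by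
    by_cases hA2 : ∃ l ∈ A, l ≠ k
    · obtain ⟨l, hl, hlk⟩ := hA2
      exact ⟨l, hlk, orth_wedge_ne_zero (he l) (he' l) (horth l hl)⟩
    · push_neg at hA2
      have hAk : A = {k} := Finset.eq_singleton_iff_unique_mem.mpr ⟨hk, hA2⟩
      obtain ⟨j, hj, hli⟩ := hsing (by rw [hAk]; simp)
      exact ⟨j, fun h => hj (h ▸ hk), linIndep_wedge_ne_zero hli⟩
  rintro ⟨f, hf, hpf⟩
  -- swap property of product states
  have hswap : ∀ x y : Fin N → Fin 2,
      ψ x * ψ y = ψ (Function.update x k (y k)) * ψ (Function.update y k (x k)) := by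
    intro x y
    simp only [hpf, prodState]
    rw [← Finset.prod_mul_distrib, ← Finset.prod_mul_distrib]
    apply Finset.prod_congr rfl
    intro i _
    by_cases h : i = k
    · subst h; rw [Function.update_self, Function.update_self]; ring
    · rw [Function.update_of_ne h, Function.update_of_ne h]
  set P : (Fin N → Fin 2) → ℂ := fun x => ∏ i ∈ Finset.univ.erase k, e i (x i) with hP
  set Q : (Fin N → Fin 2) → ℂ := fun x => ∏ i ∈ Finset.univ.erase k, e' i (x i) with hQ
  have hPsplit : ∀ x, prodState e x = e k (x k) * P x := fun x =>
    (Finset.mul_prod_erase Finset.univ _ (Finset.mem_univ k)).symm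
  have hQsplit : ∀ x, prodState e' x = e' k (x k) * Q x := fun x =>
    (Finset.mul_prod_erase Finset.univ _ (Finset.mem_univ k)).symm
  have hPupd : ∀ x a, P (Function.update x k a) = P x := by
    intro x a
    apply Finset.prod_congr rfl
    intro i hi
    rw [Function.update_of_ne (Finset.ne_of_mem_erase hi)]
  have hQupd : ∀ x a, Q (Function.update x k a) = Q x := by
    intro x a
    apply Finset.prod_congr rfl
    intro i hi
    rw [Function.update_of_ne (Finset.ne_of_mem_erase hi)]
  -- find witnesses u v with P u * Q v ≠ P v * Q u
  obtain ⟨u, v, huv⟩ : ∃ u v, P u * Q v ≠ P v * Q u := by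
    by_contra hcon
    push_neg at hcon
    choose u₀ hu₀ using fun i => unit_exists_ne_zero (he' i)
    choose u₁ hu₁ using fun i => unit_exists_ne_zero (he i)
    have hQ0 : Q u₀ ≠ 0 := Finset.prod_ne_zero_iff.mpr fun i _ => hu₀ i
    have hP1 : P u₁ ≠ 0 := Finset.prod_ne_zero_iff.mpr fun i _ => hu₁ i
    have hlmem : l ∈ Finset.univ.erase k := Finset.mem_erase.mpr ⟨hlk, Finset.mem_univ l⟩
    set R : ℂ := ∏ i ∈ (Finset.univ.erase k).erase l, e i (u₀ i) with hR
    set S : ℂ := ∏ i ∈ (Finset.univ.erase k).erase l, e' i (u₀ i) with hS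
    have hPu₀ : P u₀ = e l (u₀ l) * R := (Finset.mul_prod_erase _ _ hlmem).symm
    have hQu₀ : Q u₀ = e' l (u₀ l) * S := (Finset.mul_prod_erase _ _ hlmem).symm
    have hPb : ∀ b, P (Function.update u₀ l b) = e l b * R := by
      intro b
      rw [hP]
      simp only
      rw [← Finset.mul_prod_erase _ _ hlmem, Function.update_self]
      congr 1
      apply Finset.prod_congr rfl
      intro i hi
      rw [Function.update_of_ne (Finset.ne_of_mem_erase hi)]
    have hQb : ∀ b, Q (Function.update u₀ l b) = e' l b * S := by
      intro b
      rw [hQ]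
      simp only
      rw [← Finset.mul_prod_erase _ _ hlmem, Function.update_self]
      congr 1
      apply Finset.prod_congr rfl
      intro i hi
      rw [Function.update_of_ne (Finset.ne_of_mem_erase hi)]
    have heq : ∀ b, e l b * R * (e' l (u₀ l) * S) = e l (u₀ l) * R * (e' l b * S) := by
      intro b
      have := hcon (Function.update u₀ l b) u₀
      rwa [hPb, hQb, hPu₀, hQu₀] at this
    have hSne : S ≠ 0 := fun h => hQ0 (by rw [hQu₀, h, mul_zero])
    have he'l : e' l (u₀ l) ≠ 0 := fun h => hQ0 (by rw [hQu₀, h, zero_mul])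
    have hRz : R = 0 := by
      have h0 := heq 0
      have h1 := heq 1
      have hkey : R * (S * e' l (u₀ l)) * (e l 0 * e' l 1 - e l 1 * e' l 0) = 0 := by
        linear_combination e' l 1 * h0 - e' l 0 * h1
      rcases mul_eq_zero.mp hkey with h | h
      · rcases mul_eq_zero.mp h with h | h
        · exact h
        · exact absurd h (mul_ne_zero hSne he'l)
      · exact absurd h hwl
    have hPu₀z : P u₀ = 0 := by rw [hPu₀, hRz, mul_zero]
    have := hcon u₁ u₀
    rw [hPu₀z, zero_mul] at this
    exact mul_ne_zero hP1 hQ0 this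
  -- derive the contradiction
  have hψx : ∀ z, ψ z = (Real.sqrt p : ℂ) * (e k (z k) * P z)
      + (Real.sqrt (1-p) : ℂ) * (e' k (z k) * Q z) := by
    intro z
    rw [hψ]
    simp only
    rw [hPsplit, hQsplit]
  have h1 := hswap (Function.update u k 0) (Function.update v k 1)
  simp only [hψx, Function.update_self, hPupd, hQupd] at h1
  have key : (Real.sqrt p : ℂ) * (Real.sqrt (1-p) : ℂ)
      * (e k 0 * e' k 1 - e k 1 * e' k 0) * (P u * Q v - P v * Q u) = 0 := by
    linear_combination h1
  have hane : (Real.sqrt p : ℂ) ≠ 0 :=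
    Complex.ofReal_ne_zero.mpr (ne_of_gt (Real.sqrt_pos.mpr hp0))
  have hbne : (Real.sqrt (1-p) : ℂ) ≠ 0 :=
    Complex.ofReal_ne_zero.mpr (ne_of_gt (Real.sqrt_pos.mpr (by linarith)))
  have := mul_ne_zero (mul_ne_zero (mul_ne_zero hane hbne) hwk) (sub_ne_zero.mpr huv)
  exact this key

theorem sep_test {N : ℕ}
    (p : ℝ) (hp0 : 0 < p) (hp1 : p < 1)
    (e e' : Fin N → Fin 2 → ℂ)
    (he : ∀ i, IsUnitQubit (e i)) (he' : ∀ i, IsUnitQubit (e' i))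
    (k : Fin N)
    (horthk : ∑ j, conj (e k j) * e' k j = 0)
    (ψ : (Fin N → Fin 2) → ℂ)
    (hψ : ψ = fun x => (Real.sqrt p : ℂ) * prodState e x
        + (Real.sqrt (1 - p) : ℂ) * prodState e' x) :
    IsSeparableDensity (reducedState ψ ({k} : Finset (Fin N))) := by
  classical
  haveI instU : Unique {i : Fin N // i ∈ ({k} : Finset (Fin N))} :=
    ⟨⟨⟨k, Finset.mem_singleton_self k⟩⟩,
      fun z => Subtype.ext (Finset.mem_singleton.mp z.2)⟩
  refine ⟨2, ![p, 1-p], ![fun i => e i.1, fun i => e' i.1], ?_, ?_, ?_, ?_⟩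
  · intro m; fin_cases m
    · simpa using hp0.le
    · show (0:ℝ) ≤ 1 - p; linarith
  · rw [Fin.sum_univ_two]; simp
  · intro m i; fin_cases m
    · exact he i.1
    · exact he' i.1
  · -- matrix identity
    have hzsum : ∀ (g : ({i : Fin N // i ∈ ({k} : Finset (Fin N))} → Fin 2) → ℂ),
        ∑ z, g z = ∑ a : Fin 2, g (fun _ => a) := by
      intro g
      exact (Equiv.sum_comp (Equiv.funUnique {i : Fin N // i ∈ ({k} : Finset (Fin N))} (Fin 2)).symm g).symm
    have hsplit : ∀ (g : Fin N → Fin 2 → ℂ) (x : {i : Fin N // i ∉ ({k} : Finset (Fin N))} → Fin 2) (a : Fin 2),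
        prodState g (mergeCompl {k} x (fun _ => a))
          = g k a * prodState (fun i : {i : Fin N // i ∉ ({k} : Finset (Fin N))} => g i.1) x := by
      intro g x a
      rw [prodState, ← Finset.mul_prod_erase Finset.univ _ (Finset.mem_univ k)]
      congr 1
      · show g k (if h : k ∈ ({k} : Finset (Fin N)) then _ else _) = g k a
        rw [dif_pos (Finset.mem_singleton_self k)]
      · rw [Finset.prod_subtype (Finset.univ.erase k)
          (p := fun i => i ∉ ({k} : Finset (Fin N)))
          (fun i => by simp [Finset.mem_erase])
          (fun i => g i (mergeCompl {k} x (fun _ => a) i))]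
        apply Finset.prod_congr rfl
        intro i _
        show g i.1 (if h : i.1 ∈ ({k} : Finset (Fin N)) then _ else x ⟨i.1, h⟩) = g i.1 (x i)
        rw [dif_neg i.2]
    have hmerge : ∀ (x : {i : Fin N // i ∉ ({k} : Finset (Fin N))} → Fin 2) (a : Fin 2),
        ψ (mergeCompl {k} x (fun _ => a))
          = (Real.sqrt p : ℂ) * (e k a * prodState (fun i : {i : Fin N // i ∉ ({k} : Finset (Fin N))} => e i.1) x)
          + (Real.sqrt (1-p) : ℂ) * (e' k a * prodState (fun i : {i : Fin N // i ∉ ({k} : Finset (Fin N))} => e' i.1) x) := by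
      intro x a
      rw [hψ]
      simp only
      rw [hsplit e x a, hsplit e' x a]
    ext x y
    rw [reducedState]
    show (∑ z, ψ (mergeCompl {k} x z) * conj (ψ (mergeCompl {k} y z))) = _
    rw [hzsum (fun z => ψ (mergeCompl {k} x z) * conj (ψ (mergeCompl {k} y z)))]
    simp only [hmerge]
    set Ex := prodState (fun i : {i : Fin N // i ∉ ({k} : Finset (Fin N))} => e i.1) x with hEx
    set Ey := prodState (fun i : {i : Fin N // i ∉ ({k} : Finset (Fin N))} => e i.1) y with hEy
    set E'x := prodState (fun i : {i : Fin N // i ∉ ({k} : Finset (Fin N))} => e' i.1) x with hE'x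
    set E'y := prodState (fun i : {i : Fin N // i ∉ ({k} : Finset (Fin N))} => e' i.1) y with hE'y
    have A1 : e k 0 * conj (e k 0) + e k 1 * conj (e k 1) = 1 := by
      have := unit_inner_self (he k)
      rw [Fin.sum_univ_two] at this
      linear_combination this
    have A2 : e' k 0 * conj (e' k 0) + e' k 1 * conj (e' k 1) = 1 := by
      have := unit_inner_self (he' k)
      rw [Fin.sum_univ_two] at this
      linear_combination this
    have A3 : conj (e k 0) * e' k 0 + conj (e k 1) * e' k 1 = 0 := by
      have := horthk
      rwa [Fin.sum_univ_two] at this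
    have A4 : e k 0 * conj (e' k 0) + e k 1 * conj (e' k 1) = 0 := by
      have := congrArg conj A3
      simpa [map_add, map_mul] using this
    have A5 : (Real.sqrt p : ℂ) * (Real.sqrt p : ℂ) = (p : ℂ) := by
      rw [← Complex.ofReal_mul, Real.mul_self_sqrt hp0.le]
    have A6 : (Real.sqrt (1-p) : ℂ) * (Real.sqrt (1-p) : ℂ) = ((1-p : ℝ) : ℂ) := by
      rw [← Complex.ofReal_mul, Real.mul_self_sqrt (by linarith : (0:ℝ) ≤ 1-p)]
    rw [Fin.sum_univ_two]
    simp only [map_add, map_mul, Complex.conj_ofReal, Matrix.sum_apply, Matrix.smul_apply,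
      smul_eq_mul, Fin.sum_univ_two, Matrix.cons_val_zero, Matrix.cons_val_one, Matrix.head_cons,
      proj, Matrix.of_apply]
    linear_combination (Real.sqrt p : ℂ) * (Real.sqrt p : ℂ) * Ex * conj Ey * A1
      + Ex * conj Ey * A5
      + (Real.sqrt (1-p) : ℂ) * (Real.sqrt (1-p) : ℂ) * E'x * conj E'y * A2
      + E'x * conj E'y * A6
      + (Real.sqrt p : ℂ) * (Real.sqrt (1-p) : ℂ) * Ex * conj E'y * A4
      + (Real.sqrt p : ℂ) * (Real.sqrt (1-p) : ℂ) * E'x * conj Ey * A3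

/-- For `N ≥ 3`, a nonempty subset `A` of the qubits, `0 < p < 1`, and
single-qubit unit vectors `e i`, `e' i` with `⟨e i|e' i⟩ = 0` for all `i ∈ A` and, when `A`
is a singleton, `e j`, `e' j` linearly independent for some `j ∉ A`, the state
`ψ = √p |e₁,…,e_N⟩ + √(1-p) |e'₁,…,e'_N⟩` is a unit vector, is entangled, and is fragile
with respect to the loss of any qubit in `A`. -/
theorem canonical_form_is_fragile {N : ℕ} (hN : 3 ≤ N)
    (A : Finset (Fin N)) (hA : A.Nonempty)
    (p : ℝ) (hp0 : 0 < p) (hp1 : p < 1)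
    (e e' : Fin N → Fin 2 → ℂ)
    (he : ∀ i, IsUnitQubit (e i)) (he' : ∀ i, IsUnitQubit (e' i))
    (horth : ∀ i ∈ A, ∑ j, conj (e i j) * e' i j = 0)
    (hsing : A.card = 1 → ∃ j ∉ A, LinearIndependent ℂ ![e j, e' j])
    (ψ : (Fin N → Fin 2) → ℂ)
    (hψ : ψ = fun x => (Real.sqrt p : ℂ) * prodState e x
        + (Real.sqrt (1 - p) : ℂ) * prodState e' x) :
    IsUnitState ψ ∧ IsEntangledState ψ ∧
      ∀ k ∈ A, IsSeparableDensity (reducedState ψ ({k} : Finset (Fin N))) := by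
  refine ⟨?_, ?_, ?_⟩
  · show ∑ x, Complex.normSq (ψ x) = 1
    exact unit_aux hN A hA p hp0 hp1 e e' he he' horth ψ hψ
  · show ¬ ∃ f : Fin N → Fin 2 → ℂ, (∀ i, IsUnitQubit (f i)) ∧ ψ = prodState f
    exact ent_test hN A hA p hp0 hp1 e e' he he' horth hsing ψ hψ
  · intro k hk
    exact sep_test p hp0 hp1 e e' he he' k (horth k hk) ψ hψ
end
end

section
/- Let N ≥ 3. Suppose a symmetric N-qubit pure state |ψ⟩ can be written as |ψ⟩ = a |e_1,…,e_N⟩ + b |e_1^⊥,…,e_N^⊥⟩, where a and b are nonzero complex numbers and each (|e_i⟩, |e_i^⊥⟩) is an orthonormal pair of single-qubit vectors. Then there exist an orthonormal pair of single-qubit vectors (|e⟩, |e^⊥⟩) and nonzero complex numbers a', b' with |a'|² + |b'|² = 1 such that, up to a global phase, |ψ⟩ = a' |e⟩^{⊗N} + b' |e^⊥⟩^{⊗N}, i.e., all the single-qubit factors can be chosen equal. -/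
/-!
Contracting qubit `k` of `ψ = a ⊗ᵢ eᵢ + b ⊗ᵢ fᵢ` against `e k` kills the second branch and leaves
`a ⊗_{l ≠ k} e l`. Since `ψ` is invariant under the transposition of two other qubits `i, j`, so is
this product state, which forces `e i` and `e j` to be proportional. With `N ≥ 3` a third qubit
always exists, so every `e i` is a multiple of `e i₀` and every `f i` one of `f i₀`; the scalars are
absorbed into `a'` and `b'`, and `|a'|² + |b'|² = 1` because `e i₀ ^⊗N` and `f i₀ ^⊗N` are
orthonormal.
-/

open scoped BigOperators ComplexConjugate

noncomputable section

/-- An `N`-qubit state is symmetric if it is invariant under every permutation of the qubits. -/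
def IsSymmetricState {N : ℕ} (ψ : (Fin N → Fin 2) → ℂ) : Prop :=
  ∀ π : Equiv.Perm (Fin N), ∀ x : Fin N → Fin 2, ψ (x ∘ π) = ψ x

open Finset Function

lemma ofReal_sum_normSq {α : Type*} [Fintype α] (v : α → ℂ) :
    ((∑ x, Complex.normSq (v x) : ℝ) : ℂ) = ∑ x, conj (v x) * v x := by
  push_cast
  simp only [Complex.normSq_eq_conj_mul_self]

lemma IsUnitQubit.sum_conj_mul_self {e : Fin 2 → ℂ} (he : IsUnitQubit e) :
    ∑ j, conj (e j) * e j = 1 := by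
  rw [← ofReal_sum_normSq, he, Complex.ofReal_one]

lemma IsUnitQubit.exists_ne_zero {e : Fin 2 → ℂ} (he : IsUnitQubit e) : ∃ j, e j ≠ 0 := by
  by_contra! h
  simp [IsUnitQubit, h] at he

lemma sum_conj_mul_comm_eq_zero {α : Type*} [Fintype α] {u v : α → ℂ}
    (h : ∑ x, conj (u x) * v x = 0) : ∑ x, conj (v x) * u x = 0 := by
  simpa [map_sum, mul_comm] using congrArg conj h

lemma sum_normSq_add_of_orthonormal {α : Type*} [Fintype α] {u v : α → ℂ}
    (hu : ∑ x, conj (u x) * u x = 1) (hv : ∑ x, conj (v x) * v x = 1)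
    (huv : ∑ x, conj (u x) * v x = 0) (a b : ℂ) :
    ∑ x, Complex.normSq (a * u x + b * v x) = Complex.normSq a + Complex.normSq b := by
  have hvu := sum_conj_mul_comm_eq_zero huv
  apply Complex.ofReal_injective
  rw [ofReal_sum_normSq]
  push_cast
  rw [Complex.normSq_eq_conj_mul_self, Complex.normSq_eq_conj_mul_self]
  have hexp : ∀ x, conj (a * u x + b * v x) * (a * u x + b * v x)
      = conj a * a * (conj (u x) * u x) + conj a * b * (conj (u x) * v x)
        + conj b * a * (conj (v x) * u x) + conj b * b * (conj (v x) * v x) := by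
    intro x
    simp only [map_add, map_mul]
    ring
  simp only [hexp, sum_add_distrib, ← mul_sum, hu, hv, huv, hvu]
  ring

lemma exists_eq_smul_of_mul_eq_mul {α K : Type*} [Field K] {g h : α → K} (hg : ∃ j, g j ≠ 0)
    (hh : ∃ j, h j ≠ 0) (hgh : ∀ u v, g u * h v = g v * h u) : ∃ c : K, c ≠ 0 ∧ g = c • h := by
  obtain ⟨u₀, hu₀⟩ := hh
  obtain ⟨v₀, hv₀⟩ := hg
  refine ⟨g u₀ / h u₀, ?_, funext fun u => ?_⟩
  · have hmul : g u₀ * h v₀ ≠ 0 := hgh v₀ u₀ ▸ mul_ne_zero hv₀ hu₀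
    exact div_ne_zero (left_ne_zero_of_mul hmul) hu₀
  · rw [Pi.smul_apply, smul_eq_mul, div_mul_eq_mul_div, eq_div_iff hu₀, hgh u u₀]

section ProdState

variable {ι : Type*} [Fintype ι]

lemma prodState_eq_prod_mul_of_eq_smul {e : ι → Fin 2 → ℂ} {c : ι → ℂ} {e₀ : Fin 2 → ℂ}
    (h : ∀ i, e i = c i • e₀) (x : ι → Fin 2) :
    prodState e x = (∏ i, c i) * prodState (fun _ => e₀) x := by
  simp only [prodState, h, Pi.smul_apply, smul_eq_mul, prod_mul_distrib]

variable [DecidableEq ι]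

lemma exists_ne_ne_of_two_lt_card (h : 2 < Fintype.card ι) (i j : ι) : ∃ k, k ≠ i ∧ k ≠ j := by
  obtain ⟨k, hk, hkj⟩ := exists_mem_ne (s := univ.erase i)
    (by rw [card_erase_of_mem (mem_univ i), card_univ]; omega) j
  exact ⟨k, ne_of_mem_erase hk, hkj⟩

lemma prodState_eq_mul_mul_prod_compl {i j : ι} (hij : i ≠ j)
    (g : ι → Fin 2 → ℂ) (x : ι → Fin 2) :
    prodState g x = g i (x i) * g j (x j) * ∏ l ∈ {i, j}ᶜ, g l (x l) := by
  rw [prodState, ← prod_mul_prod_compl {i, j}, prod_pair hij]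

lemma mul_eq_mul_of_prodState_swap {g : ι → Fin 2 → ℂ}
    (hg : ∀ l, ∃ t, g l t ≠ 0) {i j : ι} (hij : i ≠ j)
    (hswap : ∀ x, prodState g (x ∘ Equiv.swap i j) = prodState g x) (u v : Fin 2) :
    g i u * g j v = g i v * g j u := by
  choose m hm using hg
  set x := update (update m i v) j u
  have hxi : x i = v := by simp [x, hij]
  have hxj : x j = u := by simp [x]
  have hxl : ∀ l ∈ ({i, j} : Finset ι)ᶜ, x l = m l ∧ Equiv.swap i j l = l := fun l hl => by
    simp only [mem_compl, mem_insert, mem_singleton, not_or] at hl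
    exact ⟨by simp [x, hl.1, hl.2], Equiv.swap_apply_of_ne_of_ne hl.1 hl.2⟩
  have hR : ∏ l ∈ ({i, j} : Finset ι)ᶜ, g l (x l) ≠ 0 :=
    prod_ne_zero_iff.2 fun l hl => (hxl l hl).1 ▸ hm l
  have hcompl : ∏ l ∈ ({i, j} : Finset ι)ᶜ, g l ((x ∘ Equiv.swap i j) l)
      = ∏ l ∈ ({i, j} : Finset ι)ᶜ, g l (x l) :=
    prod_congr rfl fun l hl => by rw [comp_apply, (hxl l hl).2]
  have h := hswap x
  rw [prodState_eq_mul_mul_prod_compl hij, prodState_eq_mul_mul_prod_compl hij, hcompl,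
    comp_apply, comp_apply, Equiv.swap_apply_left, Equiv.swap_apply_right, hxi, hxj] at h
  exact mul_right_cancel₀ hR h

lemma sum_conj_prodState_mul_prodState (e g : ι → Fin 2 → ℂ) :
    ∑ x, conj (prodState e x) * prodState g x = ∏ i, ∑ j, conj (e i j) * g i j := by
  simp only [prodState, map_prod, ← prod_mul_distrib]
  exact (Fintype.prod_sum fun i j => conj (e i j) * g i j).symm

lemma sum_conj_prodState_const_eq_one {e₀ : Fin 2 → ℂ} (he : IsUnitQubit e₀) :
    ∑ x, conj (prodState (fun _ : ι => e₀) x) * prodState (fun _ => e₀) x = 1 := by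
  rw [sum_conj_prodState_mul_prodState, he.sum_conj_mul_self, prod_const_one]

lemma sum_conj_prodState_const_eq_zero [Nonempty ι] {e₀ f₀ : Fin 2 → ℂ}
    (horth : ∑ j, conj (e₀ j) * f₀ j = 0) :
    ∑ x, conj (prodState (fun _ : ι => e₀) x) * prodState (fun _ => f₀) x = 0 := by
  rw [sum_conj_prodState_mul_prodState, horth]
  exact prod_eq_zero (mem_univ (Classical.arbitrary ι)) rfl

/-- `update e k 1` puts the all-ones vector at qubit `k`, so `prodState (update e k 1) x` is the
product over the other qubits. -/
lemma sum_conj_mul_prodState_update (g : Fin 2 → ℂ) (e : ι → Fin 2 → ℂ) (k : ι)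
    (x : ι → Fin 2) :
    ∑ t, conj (g t) * prodState e (update x k t)
      = (∑ t, conj (g t) * e k t) * prodState (update e k 1) x := by
  have hupdate : ∀ t, prodState e (update x k t) = e k t * ∏ l ∈ univ \ {k}, e l (x l) :=
    fun t => by
      simp only [prodState, apply_update e x k t, prod_update_of_mem (mem_univ k)]
  have hone : prodState (update e k 1) x = ∏ l ∈ univ \ {k}, e l (x l) := by
    simp only [prodState, apply_update (fun l (h : Fin 2 → ℂ) => h (x l)) e k 1,
      prod_update_of_mem (mem_univ k), Pi.one_apply, one_mul]
  simp only [hupdate, hone, sum_mul, mul_assoc]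

lemma mul_eq_mul_of_swap_invariant {ψ : (ι → Fin 2) → ℂ} {a b : ℂ} (ha : a ≠ 0)
    {e f : ι → Fin 2 → ℂ} (he : ∀ l, IsUnitQubit (e l)) {i j k : ι} (hij : i ≠ j)
    (hik : i ≠ k) (hjk : j ≠ k) (horth : ∑ t, conj (e k t) * f k t = 0)
    (hψ : ψ = fun x => a * prodState e x + b * prodState f x)
    (hswap : ∀ x, ψ (x ∘ Equiv.swap i j) = ψ x) (u v : Fin 2) :
    e i u * e j v = e i v * e j u := by
  have hcontract : ∀ x, ∑ t, conj (e k t) * ψ (update x k t) = a * prodState (update e k 1) x :=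
    fun x => by
      simp only [hψ, mul_add, sum_add_distrib, mul_left_comm (conj _) a,
        mul_left_comm (conj _) b, ← mul_sum, sum_conj_mul_prodState_update,
        (he k).sum_conj_mul_self, horth]
      ring
  have hswap' : ∀ x, prodState (update e k 1) (x ∘ Equiv.swap i j) = prodState (update e k 1) x :=
    fun x => by
      apply mul_left_cancel₀ ha
      rw [← hcontract, ← hcontract]
      refine sum_congr rfl fun t _ => ?_
      rw [show update (x ∘ Equiv.swap i j) k t = update x k t ∘ Equiv.swap i j by
        rw [update_comp_equiv, Equiv.symm_swap, Equiv.swap_apply_of_ne_of_ne hik.symm hjk.symm],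
        hswap]
  have hne : ∀ l, ∃ t, update e k 1 l t ≠ 0 := fun l => by
    rcases eq_or_ne l k with rfl | hl
    · exact ⟨0, by simp⟩
    · simpa only [update_of_ne hl] using (he l).exists_ne_zero
  simpa only [update_of_ne hik, update_of_ne hjk] using
    mul_eq_mul_of_prodState_swap hne hij hswap' u v

lemma exists_factor_eq_smul_of_swap_invariant {ψ : (ι → Fin 2) → ℂ} {a b : ℂ} (ha : a ≠ 0)
    {e f : ι → Fin 2 → ℂ} (he : ∀ l, IsUnitQubit (e l))
    (horth : ∀ l, ∑ t, conj (e l t) * f l t = 0)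
    (hψ : ψ = fun x => a * prodState e x + b * prodState f x)
    (hcard : 2 < Fintype.card ι) (hswap : ∀ i j x, ψ (x ∘ Equiv.swap i j) = ψ x) (i j : ι) :
    ∃ c : ℂ, c ≠ 0 ∧ e i = c • e j := by
  rcases eq_or_ne i j with rfl | hij
  · exact ⟨1, one_ne_zero, (one_smul ℂ _).symm⟩
  obtain ⟨k, hki, hkj⟩ := exists_ne_ne_of_two_lt_card hcard i j
  exact exists_eq_smul_of_mul_eq_mul (he i).exists_ne_zero (he j).exists_ne_zero
    (mul_eq_mul_of_swap_invariant ha he hij hki.symm hkj.symm (horth k) hψ (hswap i j))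

end ProdState

/-- If a symmetric `N`-qubit pure state (`N ≥ 3`) can be written as
`a |e₁,…,e_N⟩ + b |e₁^⊥,…,e_N^⊥⟩` with `a, b` nonzero and each `(e i, f i)` an orthonormal
pair, then all single-qubit factors can be chosen equal: up to a global phase,
`ψ = a' |e⟩^{⊗N} + b' |e^⊥⟩^{⊗N}` with `a', b'` nonzero and `|a'|² + |b'|² = 1`. -/
theorem symmetric_polygonal_form_equal_factors {N : ℕ} (hN : 3 ≤ N)
    (ψ : (Fin N → Fin 2) → ℂ) (hunit : IsUnitState ψ) (hsym : IsSymmetricState ψ)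
    (a b : ℂ) (ha : a ≠ 0) (hb : b ≠ 0)
    (e f : Fin N → Fin 2 → ℂ)
    (he : ∀ i, IsUnitQubit (e i)) (hf : ∀ i, IsUnitQubit (f i))
    (horth : ∀ i, ∑ j, conj (e i j) * f i j = 0)
    (hψ : ψ = fun x => a * prodState e x + b * prodState f x) :
    ∃ (e₀ f₀ : Fin 2 → ℂ) (a' b' c : ℂ),
      IsUnitQubit e₀ ∧ IsUnitQubit f₀ ∧ (∑ j, conj (e₀ j) * f₀ j = 0) ∧
      a' ≠ 0 ∧ b' ≠ 0 ∧ Complex.normSq a' + Complex.normSq b' = 1 ∧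
      ‖c‖ = 1 ∧
      ψ = fun x => c * (a' * prodState (fun _ : Fin N => e₀) x
          + b' * prodState (fun _ : Fin N => f₀) x) := by
  have hcard : 2 < Fintype.card (Fin N) := by rw [Fintype.card_fin]; omega
  have hswap : ∀ i j x, ψ (x ∘ Equiv.swap i j) = ψ x := fun i j => hsym (Equiv.swap i j)
  have hψ' : ψ = fun x => b * prodState f x + a * prodState e x := by
    rw [hψ]; funext x; exact add_comm _ _
  let i₀ : Fin N := ⟨0, by omega⟩
  have : Nonempty (Fin N) := ⟨i₀⟩
  choose ce hce0 hce using fun i =>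
    exists_factor_eq_smul_of_swap_invariant ha he horth hψ hcard hswap i i₀
  choose cf hcf0 hcf using fun i =>
    exists_factor_eq_smul_of_swap_invariant hb hf (fun l => sum_conj_mul_comm_eq_zero (horth l))
      hψ' hcard hswap i i₀
  have hψ₀ : ψ = fun x => (a * ∏ i, ce i) * prodState (fun _ => e i₀) x
      + (b * ∏ i, cf i) * prodState (fun _ => f i₀) x := by
    rw [hψ]; funext x
    rw [prodState_eq_prod_mul_of_eq_smul hce, prodState_eq_prod_mul_of_eq_smul hcf, mul_assoc,
      mul_assoc]
  have hnorm : Complex.normSq (a * ∏ i, ce i) + Complex.normSq (b * ∏ i, cf i) = 1 := by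
    rw [← sum_normSq_add_of_orthonormal (sum_conj_prodState_const_eq_one (ι := Fin N) (he i₀))
      (sum_conj_prodState_const_eq_one (hf i₀)) (sum_conj_prodState_const_eq_zero (horth i₀))]
    rw [hψ₀] at hunit
    exact hunit
  refine ⟨e i₀, f i₀, _, _, 1, he i₀, hf i₀, horth i₀,
    mul_ne_zero ha (prod_ne_zero_iff.2 fun i _ => hce0 i),
    mul_ne_zero hb (prod_ne_zero_iff.2 fun i _ => hcf0 i), hnorm, norm_one, ?_⟩
  simpa only [one_mul] using hψ₀
end
end

section
/- For every N ≥ 3 and every real u ≥ 0, let ρ_{1,2} be the two-qubit reduced density matrix of ψ_N^{(1)}(u) obtained by tracing out qubits 3,…,N. Then the determinant of the partial transpose of ρ_{1,2} with respect to the first qubit equals −[N(1+Nu²)]^{−4}; in particular it is strictly negative, so ρ_{1,2} is entangled and ψ_N^{(1)}(u) is robust with respect to the loss of any N−2 qubits. -/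
open scoped BigOperators ComplexConjugate

noncomputable section

/-- The `W`-type Dicke state `|D_N^{(1)}⟩`. -/
def dickeW (N : ℕ) : (Fin N → Fin 2) → ℂ :=
  fun x => if (∑ i, ((x i : ℕ))) = 1 then ((1 / Real.sqrt N : ℝ) : ℂ) else 0

/-- The normalized state `ψ_N^{(1)}(u) = (√N u |0…0⟩ + |D_N^{(1)}⟩)/√(1 + N u²)`. -/
def psiW (N : ℕ) (u : ℝ) : (Fin N → Fin 2) → ℂ :=
  fun x => (((Real.sqrt N * u : ℝ) : ℂ) * (if (∀ i, x i = 0) then 1 else 0) + dickeW N x)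
    / ((Real.sqrt (1 + N * u ^ 2) : ℝ) : ℂ)

/-- Reassemble a full `N`-qubit assignment from an assignment `v` of the first two qubits and
an assignment `z` of the qubits `3, …, N`. -/
def extendFirstTwo {N : ℕ} (v : Fin 2 → Fin 2) (z : {i : Fin N // 2 ≤ (i : ℕ)} → Fin 2) :
    Fin N → Fin 2 :=
  fun i => if h : (i : ℕ) < 2 then v ⟨(i : ℕ), h⟩ else z ⟨i, by omega⟩

/-- The two-qubit reduced density matrix of `ψ` obtained by tracing out qubits `3, …, N`. -/
def rhoFirstTwo {N : ℕ} (ψ : (Fin N → Fin 2) → ℂ) :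
    Matrix (Fin 2 → Fin 2) (Fin 2 → Fin 2) ℂ :=
  Matrix.of fun v w => ∑ z : {i : Fin N // 2 ≤ (i : ℕ)} → Fin 2,
    ψ (extendFirstTwo v z) * conj (ψ (extendFirstTwo w z))

/-- The partial transpose of a two-qubit density matrix with respect to the first qubit:
`ρ^{T₁}_{(i,j),(k,l)} = ρ_{(k,j),(i,l)}`. -/
def ptransposeFirst (ρ : Matrix (Fin 2 → Fin 2) (Fin 2 → Fin 2) ℂ) :
    Matrix (Fin 2 → Fin 2) (Fin 2 → Fin 2) ℂ :=
  Matrix.of fun v w => ρ ![w 0, v 1] ![v 0, w 1]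

/-!
`ψ_N^{(1)}(u)` is permutation symmetric and supported on Hamming weights `0` and `1`, so the
marginal on any two qubits is the same matrix, whose `(v, w)` entry depends only on the weights
of `v` and `w` and vanishes once either weight is `≥ 2`. Its partial transpose is then
anti-triangular, with every antidiagonal entry equal to the `(01, 01)` entry `1 / (N(1 + Nu²))`,
so its determinant is `-(N(1 + Nu²))⁻⁴ < 0`. A separable state has a positive semidefinite
partial transpose, hence a nonnegative determinant.
-/

open scoped ComplexOrder

def hammingWt {ι : Type*} [Fintype ι] (x : ι → Fin 2) : ℕ := ∑ i, (x i : ℕ)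

section HammingWt

variable {ι κ : Type*} [Fintype ι] [Fintype κ]

lemma hammingWt_comp_equiv (e : κ ≃ ι) (x : ι → Fin 2) : hammingWt (x ∘ e) = hammingWt x :=
  Equiv.sum_comp e fun i => (x i : ℕ)

lemma hammingWt_eq_zero_iff (x : ι → Fin 2) : hammingWt x = 0 ↔ ∀ i, x i = 0 := by
  simp [hammingWt, Finset.sum_eq_zero_iff, Fin.val_eq_zero_iff]

lemma hammingWt_cons {m : ℕ} (a : Fin 2) (z : Fin m → Fin 2) :
    hammingWt (Fin.cons a z : Fin (m + 1) → Fin 2) = a + hammingWt z := by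
  simp [hammingWt, Fin.sum_univ_succ]

lemma sum_hammingWt_fin {M : Type*} [AddCommMonoid M] (m : ℕ) (F : ℕ → M)
    (hF : ∀ k, 2 ≤ k → F k = 0) :
    ∑ z : Fin m → Fin 2, F (hammingWt z) = F 0 + m • F 1 := by
  induction m generalizing F with
  | zero => simp [hammingWt]
  | succ m ih =>
    rw [← (Fin.consEquiv fun _ => Fin 2).sum_comp, Fintype.sum_prod_type, Fin.sum_univ_two]
    simp only [Fin.consEquiv, Equiv.coe_fn_mk, hammingWt_cons, Fin.val_zero, Fin.val_one, zero_add]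
    rw [ih F hF, ih (fun k => F (1 + k)) fun k hk => hF _ (by omega), hF 2 le_rfl, succ_nsmul]
    simp only [add_zero, smul_zero]
    abel

lemma sum_hammingWt [DecidableEq κ] {M : Type*} [AddCommMonoid M] (F : ℕ → M)
    (hF : ∀ k, 2 ≤ k → F k = 0) :
    ∑ z : κ → Fin 2, F (hammingWt z) = F 0 + Fintype.card κ • F 1 := by
  rw [← sum_hammingWt_fin _ F hF,
    ← ((Fintype.equivFin κ).symm.arrowCongr (Equiv.refl (Fin 2))).sum_comp]
  exact Fintype.sum_congr _ _ fun z => congrArg F (hammingWt_comp_equiv (Fintype.equivFin κ) z)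

end HammingWt

lemma hammingWt_mergeCompl {N : ℕ} (S : Finset (Fin N)) (x : {i : Fin N // i ∉ S} → Fin 2)
    (z : {i : Fin N // i ∈ S} → Fin 2) :
    hammingWt (mergeCompl S x z) = hammingWt x + hammingWt z := by
  simp only [hammingWt]
  rw [← Fintype.sum_subtype_add_sum_subtype (· ∈ S), add_comm]
  -- `congr!` identifies the two `Fintype` instances on `{i // i ∈ S}`
  congr 1 <;> exact Finset.sum_congr (by congr!) fun i _ => by
    simp [mergeCompl, i.2]

lemma hammingWt_extendFirstTwo {N : ℕ} (hN : 2 ≤ N) (v : Fin 2 → Fin 2)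
    (z : {i : Fin N // 2 ≤ (i : ℕ)} → Fin 2) :
    hammingWt (extendFirstTwo v z) = hammingWt v + hammingWt z := by
  rw [hammingWt, ← Fintype.sum_subtype_add_sum_subtype fun i : Fin N => (i : ℕ) < 2]
  congr 1
  · exact (Fintype.sum_equiv (Fin.castLEquiv hN) _ _ fun j => by
      simp [extendFirstTwo, Fin.castLEquiv, j.isLt]).symm
  · exact Fintype.sum_equiv (Equiv.subtypeEquivRight fun i => not_lt) _ _ fun i => by
      simp only [extendFirstTwo, dif_neg i.2]; rfl

lemma card_subtype_two_le_val {N : ℕ} : Fintype.card {i : Fin N // 2 ≤ (i : ℕ)} = N - 2 := by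
  simp only [Fintype.card_subtype, ← not_lt, Finset.filter_not,
    Finset.card_sdiff_of_subset (Finset.filter_subset _ _), Fin.card_filter_val_lt,
    Finset.card_univ, Fintype.card_fin]
  omega

def psiWAmp (N : ℕ) (u : ℝ) (k : ℕ) : ℝ :=
  (if k = 0 then Real.sqrt N * u else if k = 1 then 1 / Real.sqrt N else 0)
    / Real.sqrt (1 + N * u ^ 2)

lemma psiWAmp_of_two_le {N : ℕ} {u : ℝ} {k : ℕ} (hk : 2 ≤ k) : psiWAmp N u k = 0 := by
  simp [psiWAmp, show k ≠ 0 by omega, show k ≠ 1 by omega]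

lemma psiWAmp_one_mul_self (N : ℕ) (u : ℝ) :
    psiWAmp N u 1 * psiWAmp N u 1 = 1 / (N * (1 + N * u ^ 2)) := by
  rw [psiWAmp, if_neg one_ne_zero, if_pos rfl, div_mul_div_comm, div_mul_div_comm, one_mul,
    Real.mul_self_sqrt N.cast_nonneg, Real.mul_self_sqrt (by positivity), div_div]

lemma psiW_apply (N : ℕ) (u : ℝ) (x : Fin N → Fin 2) :
    psiW N u x = psiWAmp N u (hammingWt x) := by
  have hwt : (∑ i, (x i : ℕ)) = hammingWt x := rfl
  simp only [psiW, dickeW, psiWAmp, hwt, ← hammingWt_eq_zero_iff]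
  rcases Nat.lt_or_ge (hammingWt x) 2 with h | h
  · interval_cases hammingWt x <;> simp
  · simp [show hammingWt x ≠ 0 by omega, show hammingWt x ≠ 1 by omega]

/-- Entries of the two-qubit marginal of `ψ_N^{(1)}(u)`, indexed by the Hamming weights of the
row and column: the `N - 2` traced qubits are either all `|0⟩` or carry the single excitation
at one of `N - 2` sites. -/
def psiWPairEntry (N : ℕ) (u : ℝ) (j k : ℕ) : ℝ :=
  psiWAmp N u j * psiWAmp N u k + (N - 2 : ℕ) * (psiWAmp N u (j + 1) * psiWAmp N u (k + 1))

lemma psiWPairEntry_of_two_le {N : ℕ} {u : ℝ} {j k : ℕ} (h : 2 ≤ j ∨ 2 ≤ k) :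
    psiWPairEntry N u j k = 0 := by
  rcases h with h | h <;>
    simp [psiWPairEntry, psiWAmp_of_two_le h, psiWAmp_of_two_le (Nat.le_succ_of_le h)]

lemma psiWPairEntry_one_one (N : ℕ) (u : ℝ) :
    psiWPairEntry N u 1 1 = 1 / (N * (1 + N * u ^ 2)) := by
  simp [psiWPairEntry, psiWAmp_of_two_le (le_refl 2), psiWAmp_one_mul_self]

def psiWPair {ι : Type*} [Fintype ι] (N : ℕ) (u : ℝ) : Matrix (ι → Fin 2) (ι → Fin 2) ℂ :=
  Matrix.of fun v w => psiWPairEntry N u (hammingWt v) (hammingWt w)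

lemma sum_psiW_mul_conj {N : ℕ} (u : ℝ) {ι κ : Type*} [Fintype ι] [Fintype κ] [DecidableEq κ]
    (hκ : Fintype.card κ = N - 2) (ext : (ι → Fin 2) → (κ → Fin 2) → Fin N → Fin 2)
    (hext : ∀ v z, hammingWt (ext v z) = hammingWt v + hammingWt z) (v w : ι → Fin 2) :
    ∑ z : κ → Fin 2, psiW N u (ext v z) * conj (psiW N u (ext w z)) = psiWPair N u v w := by
  simp only [psiW_apply, hext, Complex.conj_ofReal, ← Complex.ofReal_mul]
  rw [sum_hammingWt (fun k => ((psiWAmp N u (hammingWt v + k) * psiWAmp N u (hammingWt w + k)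
    : ℝ) : ℂ)) fun k hk => by simp [psiWAmp_of_two_le (show 2 ≤ hammingWt v + k by omega)]]
  simp [psiWPair, psiWPairEntry, hκ]

lemma rhoFirstTwo_psiW {N : ℕ} (hN : 2 ≤ N) (u : ℝ) :
    rhoFirstTwo (psiW N u) = psiWPair N u := by
  ext v w
  exact sum_psiW_mul_conj u card_subtype_two_le_val extendFirstTwo
    (hammingWt_extendFirstTwo hN) v w

lemma reducedState_psiW {N : ℕ} (u : ℝ) {S : Finset (Fin N)} (hS : S.card = N - 2) :
    reducedState (psiW N u) S = psiWPair N u := by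
  ext x y
  exact sum_psiW_mul_conj u (by simpa using hS) (mergeCompl S) (hammingWt_mergeCompl S) x y

def qubitPairEquivFin4 : (Fin 2 → Fin 2) ≃ Fin 4 where
  toFun z := ⟨2 * z 0 + z 1, by omega⟩
  invFun := ![![0, 0], ![0, 1], ![1, 0], ![1, 1]]
  left_inv := by decide
  right_inv := by decide

/-- In the basis `|00⟩, |01⟩, |10⟩, |11⟩` the partial transpose is anti-triangular, with every
antidiagonal entry equal to `f 1 1`. -/
lemma det_ptransposeFirst_of_hammingWt (f : ℕ → ℕ → ℂ)
    (hf : ∀ j k, 2 ≤ j ∨ 2 ≤ k → f j k = 0) :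
    (ptransposeFirst (Matrix.of fun v w => f (hammingWt v) (hammingWt w))).det = -f 1 1 ^ 4 := by
  rw [← Matrix.det_reindex_self qubitPairEquivFin4]
  have hM : Matrix.reindex qubitPairEquivFin4 qubitPairEquivFin4
      (ptransposeFirst (Matrix.of fun v w => f (hammingWt v) (hammingWt w))) =
        !![f 0 0, f 0 1, f 1 0, f 1 1;
           f 1 0, f 1 1, 0, 0;
           f 0 1, 0, f 1 1, 0;
           f 1 1, 0, 0, 0] := by
    ext i j
    fin_cases i <;> fin_cases j <;>
      simp [ptransposeFirst, qubitPairEquivFin4, hammingWt, hf 0 2, hf 1 2, hf 2 0, hf 2 1, hf 2 2]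
  rw [hM, Matrix.det_succ_row_zero]
  simp [Fin.sum_univ_succ, Matrix.det_succ_row_zero, Fin.succAbove]
  ring

lemma det_ptransposeFirst_psiWPair (N : ℕ) (u : ℝ) :
    (ptransposeFirst (psiWPair N u)).det = ((-(1 / (N * (1 + N * u ^ 2)) ^ 4) : ℝ) : ℂ) := by
  rw [psiWPair, det_ptransposeFirst_of_hammingWt (fun j k => psiWPairEntry N u j k)
    fun j k h => by rw [psiWPairEntry_of_two_le h, Complex.ofReal_zero], psiWPairEntry_one_one]
  push_cast
  rw [div_pow, one_pow]

/-- Peres' criterion: the partial transpose of a separable state is again a mixture of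
product projectors, the first factor being conjugated. -/
lemma IsSeparableDensity.ptransposeFirst_posSemidef
    {ρ : Matrix (Fin 2 → Fin 2) (Fin 2 → Fin 2) ℂ} (h : IsSeparableDensity ρ) :
    (ptransposeFirst ρ).PosSemidef := by
  obtain ⟨n, w, e, hw, -, -, rfl⟩ := h
  have hrep : ptransposeFirst (∑ m, (w m : ℂ) • proj (prodState (e m))) =
      ∑ m, proj fun x : Fin 2 → Fin 2 =>
        (Real.sqrt (w m) : ℂ) * (conj (e m 0 (x 0)) * e m 1 (x 1)) := by
    ext v v'
    simp only [ptransposeFirst, Matrix.of_apply, Matrix.sum_apply, Matrix.smul_apply, proj,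
      prodState, Fin.prod_univ_two, smul_eq_mul, map_mul, Complex.conj_conj,
      Complex.conj_ofReal, Matrix.cons_val_zero, Matrix.cons_val_one]
    refine Finset.sum_congr rfl fun m _ => ?_
    have hsq : (Real.sqrt (w m) : ℂ) * (Real.sqrt (w m) : ℂ) = w m := by
      rw [← Complex.ofReal_mul, Real.mul_self_sqrt (hw m)]
    linear_combination (e m 0 (v' 0) * e m 1 (v 1) * (conj (e m 0 (v 0)) * conj (e m 1 (v' 1))))
      * hsq.symm
  rw [hrep]
  exact Matrix.posSemidef_sum _ fun m _ => Matrix.posSemidef_vecMulVec_self_star _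

lemma not_isSeparableDensity_of_re_det_ptransposeFirst_neg
    {ρ : Matrix (Fin 2 → Fin 2) (Fin 2 → Fin 2) ℂ} (h : (ptransposeFirst ρ).det.re < 0) :
    ¬ IsSeparableDensity ρ := fun hsep =>
  h.not_ge (Complex.nonneg_iff.1 hsep.ptransposeFirst_posSemidef.det_nonneg).1

lemma IsSeparableDensity.submatrix_comp_equiv {ι κ : Type*} [Fintype ι] [Fintype κ]
    {ρ : Matrix (ι → Fin 2) (ι → Fin 2) ℂ} (h : IsSeparableDensity ρ) (e : ι ≃ κ) :
    IsSeparableDensity (ρ.submatrix (· ∘ e) (· ∘ e)) := by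
  obtain ⟨n, w, E, hw, hw1, hE, rfl⟩ := h
  refine ⟨n, w, fun m => E m ∘ e.symm, hw, hw1, fun m j => hE m _, ?_⟩
  have hprod : ∀ m (v : κ → Fin 2), prodState (E m) (v ∘ e) = prodState (E m ∘ e.symm) v :=
    fun m v => (e.symm.prod_comp _).symm.trans (by simp [prodState])
  ext v v'
  simp [Matrix.sum_apply, proj, hprod]

lemma psiWPair_submatrix_comp_equiv {ι κ : Type*} [Fintype ι] [Fintype κ] (N : ℕ) (u : ℝ)
    (e : ι ≃ κ) : (psiWPair N u).submatrix (· ∘ e) (· ∘ e) = psiWPair N u := by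
  ext v w
  simp [psiWPair, hammingWt_comp_equiv]

lemma re_det_ptransposeFirst_psiWPair_neg {N : ℕ} (hN : 0 < N) (u : ℝ) :
    (ptransposeFirst (psiWPair N u)).det.re < 0 := by
  rw [det_ptransposeFirst_psiWPair, Complex.ofReal_re, neg_lt_zero]
  positivity

lemma not_isSeparableDensity_psiWPair {N : ℕ} (hN : 0 < N) (u : ℝ) {ι : Type*} [Fintype ι]
    (hι : Fintype.card ι = 2) : ¬ IsSeparableDensity (psiWPair (ι := ι) N u) := fun hsep => by
  have := hsep.submatrix_comp_equiv (Fintype.equivFinOfCardEq hι)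
  rw [psiWPair_submatrix_comp_equiv] at this
  exact not_isSeparableDensity_of_re_det_ptransposeFirst_neg
    (re_det_ptransposeFirst_psiWPair_neg hN u) this

theorem psiW_det_ptranspose_neg_general {N : ℕ} (hN : 3 ≤ N) (u : ℝ) :
    (ptransposeFirst (rhoFirstTwo (psiW N u))).det
        = -(1 / ((N : ℂ) * (1 + (N : ℂ) * (u : ℂ) ^ 2)) ^ 4) ∧
    ((ptransposeFirst (rhoFirstTwo (psiW N u))).det).re < 0 ∧
    ¬ IsSeparableDensity (rhoFirstTwo (psiW N u)) ∧
    (∀ S : Finset (Fin N), S.card = N - 2 →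
      ¬ IsSeparableDensity (reducedState (psiW N u) S)) := by
  rw [rhoFirstTwo_psiW (by omega)]
  refine ⟨?_, re_det_ptransposeFirst_psiWPair_neg (by omega) u,
    not_isSeparableDensity_psiWPair (by omega) u (by simp), fun S hS => ?_⟩
  · rw [det_ptransposeFirst_psiWPair]
    push_cast
    ring
  · rw [reducedState_psiW u hS]
    refine not_isSeparableDensity_psiWPair (by omega) u ?_
    rw [Fintype.card_subtype_compl, Fintype.card_fin, Fintype.card_coe, hS]
    omega

/-- For every `N ≥ 3` and every `u ≥ 0`, the determinant of the partial
transpose (with respect to the first qubit) of the two-qubit reduced density matrix of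
`ψ_N^{(1)}(u)` equals `-[N(1 + N u²)]⁻⁴`; in particular it is strictly negative, so this
reduced state is entangled and `ψ_N^{(1)}(u)` is robust with respect to the loss of any
`N - 2` qubits. -/
theorem psiW_det_ptranspose_neg {N : ℕ} (hN : 3 ≤ N) (u : ℝ) (hu : 0 ≤ u) :
    (ptransposeFirst (rhoFirstTwo (psiW N u))).det
        = -(1 / ((N : ℂ) * (1 + (N : ℂ) * (u : ℂ) ^ 2)) ^ 4) ∧
    ((ptransposeFirst (rhoFirstTwo (psiW N u))).det).re < 0 ∧
    ¬ IsSeparableDensity (rhoFirstTwo (psiW N u)) ∧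
    (∀ S : Finset (Fin N), S.card = N - 2 →
      ¬ IsSeparableDensity (reducedState (psiW N u) S)) :=
  psiW_det_ptranspose_neg_general hN u
end
end

section
/- Let N ≥ 3 and 1 ≤ k ≤ N−1. For every subset S of the qubits with |S| ≤ N−2, the reduced density operator obtained from the Dicke state |D_N^{(k)}⟩ by tracing out the qubits in S is entangled; i.e., every entangled symmetric Dicke state |D_N^{(k)}⟩ is robust with respect to the loss of any number t ≤ N−2 of qubits. -/
open scoped BigOperators ComplexConjugate

noncomputable section

/-- The `k`-excitation Dicke state `|D_N^{(k)}⟩`: the normalized equal superposition of all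
computational basis states of `N` qubits with exactly `k` qubits in state `|1⟩`. -/
def dicke (N k : ℕ) : (Fin N → Fin 2) → ℂ :=
  fun x => if (∑ i, ((x i : ℕ))) = k then ((1 / Real.sqrt (N.choose k) : ℝ) : ℂ) else 0

-- counting lemma
lemma card_filter_sum (α : Type*) [Fintype α] [DecidableEq α] (m : ℕ) :
    (Finset.univ.filter fun f : α → Fin 2 => (∑ i, ((f i : ℕ))) = m).card
      = (Fintype.card α).choose m := by
  have hsum : ∀ f : α → Fin 2, (∑ i, ((f i : ℕ)))
      = (Finset.univ.filter fun i => f i = 1).card := by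
    intro f
    rw [Finset.card_filter]
    refine Finset.sum_congr rfl fun i _ => ?_
    by_cases h : f i = 1
    · simp [h]
    · have h2 : (f i : ℕ) < 2 := (f i).isLt
      have h1 : (f i : ℕ) ≠ 1 := fun hc => h (Fin.ext hc)
      simp [h]
      omega
  rw [← Finset.card_univ, ← Finset.card_powersetCard m Finset.univ]
  apply Finset.card_bij (fun f _ => Finset.univ.filter fun i => f i = 1)
  · intro f hf
    simp only [Finset.mem_filter, Finset.mem_univ, true_and] at hf
    simp only [Finset.mem_powersetCard]
    exact ⟨Finset.subset_univ _, by rw [← hsum f, hf]⟩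
  · intro f hf g hg hfg
    funext i
    have : (i ∈ Finset.univ.filter fun j => f j = 1) ↔
        (i ∈ Finset.univ.filter fun j => g j = 1) := by rw [hfg]
    simp only [Finset.mem_filter, Finset.mem_univ, true_and] at this
    have h2 : (f i : ℕ) < 2 := (f i).isLt
    have h3 : (g i : ℕ) < 2 := (g i).isLt
    have h4 : (f i : ℕ) = 1 ↔ (g i : ℕ) = 1 := by
      constructor
      · intro h; exact Fin.val_eq_of_eq (this.1 (Fin.ext h))
      · intro h; exact Fin.val_eq_of_eq (this.2 (Fin.ext h))
    exact Fin.ext (by omega)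
  · intro A hA
    simp only [Finset.mem_powersetCard] at hA
    refine ⟨fun i => if i ∈ A then 1 else 0, ?_, ?_⟩
    · simp only [Finset.mem_filter, Finset.mem_univ, true_and]
      rw [hsum]
      rw [← hA.2]
      congr 1
      ext i
      by_cases h : i ∈ A <;> simp [h]
    · ext i
      by_cases h : i ∈ A <;> simp [h]

-- strict log-concavity
lemma choose_logconcave {n i : ℕ} (h : i + 2 ≤ n) :
    n.choose (i+2) * n.choose i < n.choose (i+1) ^ 2 := by
  obtain ⟨d, hd⟩ : ∃ d, n = i + 2 + d := ⟨n - (i+2), by omega⟩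
  subst hd
  have e1 : (i+2+d).choose (i+2) * (i+2) = (i+2+d).choose (i+1) * (d+1) := by
    have h0 := Nat.choose_succ_right_eq (i+2+d) (i+1)
    have h1 : i + 2 + d - (i+1) = d + 1 := by omega
    rw [show i+1+1 = i+2 from rfl, h1] at h0
    omega
  have e2 : (i+2+d).choose (i+1) * (i+1) = (i+2+d).choose i * (d+2) := by
    have h0 := Nat.choose_succ_right_eq (i+2+d) i
    have h1 : i + 2 + d - i = d + 2 := by omega
    rw [h1] at h0
    omega
  have hB : 0 < (i+2+d).choose (i+1) := Nat.choose_pos (by omega)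
  nlinarith [e1, e2, hB]

section WitAux

def asmb {ι : Type*} [DecidableEq ι] (a b : ι) (r : {i : ι // i ≠ a ∧ i ≠ b} → Fin 2)
    (s t : Fin 2) : ι → Fin 2 :=
  fun i => if h : i = a then s else if h' : i = b then t else r ⟨i, h, h'⟩

variable {ι : Type*} [Fintype ι] [DecidableEq ι]

lemma asmb_a (a b : ι) (r) (s t : Fin 2) : asmb a b r s t a = s := by simp [asmb]

lemma asmb_b (a b : ι) (hab : a ≠ b) (r) (s t : Fin 2) : asmb a b r s t b = t := by
  simp [asmb, Ne.symm hab]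

lemma asmb_other (a b : ι) (i : ι) (h1 : i ≠ a) (h2 : i ≠ b) (r) (s t : Fin 2) :
    asmb a b r s t i = r ⟨i, h1, h2⟩ := by simp [asmb, h1, h2]

@[to_additive]
lemma prod_asmb {M : Type*} [CommMonoid M] (a b : ι) (hab : a ≠ b)
    (g : ι → Fin 2 → M) (r : {i : ι // i ≠ a ∧ i ≠ b} → Fin 2) (s t : Fin 2) :
    ∏ i, g i (asmb a b r s t i)
      = g a s * g b t * ∏ o : {i : ι // i ≠ a ∧ i ≠ b}, g o.1 (r o) := by
  have hb : b ∈ Finset.univ.erase a := Finset.mem_erase.2 ⟨Ne.symm hab, Finset.mem_univ b⟩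
  rw [← Finset.mul_prod_erase Finset.univ _ (Finset.mem_univ a),
    ← Finset.mul_prod_erase _ _ hb, asmb_a, asmb_b a b hab, ← mul_assoc]
  congr 1
  rw [Finset.prod_subtype ((Finset.univ.erase a).erase b)
      (p := fun i => i ≠ a ∧ i ≠ b)
      (fun i => by simp [Finset.mem_erase, and_comm]) (fun i => g i (asmb a b r s t i))]
  refine Finset.prod_congr rfl fun o _ => ?_
  rw [asmb_other a b o.1 o.2.1 o.2.2]


/-- The entanglement-witness functional. -/
def Wit (a b : ι) (v : Fin 2 → Fin 2 → ℝ) (ρ : Matrix (ι → Fin 2) (ι → Fin 2) ℂ) : ℂ :=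
  ∑ p : ({i : ι // i ≠ a ∧ i ≠ b} → Fin 2) × (Fin 2 × Fin 2 × Fin 2 × Fin 2),
    ((v p.2.1 p.2.2.2.2 * v p.2.2.2.1 p.2.2.1 : ℝ) : ℂ) *
      ρ (asmb a b p.1 p.2.1 p.2.2.1) (asmb a b p.1 p.2.2.2.1 p.2.2.2.2)

lemma Wit_sum {n : ℕ} (a b : ι) (v : Fin 2 → Fin 2 → ℝ) (w : Fin n → ℝ)
    (P : Fin n → Matrix (ι → Fin 2) (ι → Fin 2) ℂ) :
    Wit a b v (∑ m, (w m : ℂ) • P m) = ∑ m, (w m : ℂ) * Wit a b v (P m) := by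
  simp only [Wit, Matrix.sum_apply, Matrix.smul_apply, smul_eq_mul, Finset.mul_sum]
  rw [Finset.sum_comm]
  exact Finset.sum_congr rfl fun m _ => Finset.sum_congr rfl fun p _ => by ring

lemma Wit_proj_prod (a b : ι) (hab : a ≠ b) (v : Fin 2 → Fin 2 → ℝ)
    (e : ι → Fin 2 → ℂ) (he : ∀ i, IsUnitQubit (e i)) :
    Wit a b v (proj (prodState e)) =
      Complex.normSq (∑ s : Fin 2, ∑ δ : Fin 2, (v s δ : ℂ) * e a s * conj (e b δ)) := by
  have key : ∀ (r : {i : ι // i ≠ a ∧ i ≠ b} → Fin 2) (s t : Fin 2),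
      prodState e (asmb a b r s t) =
        e a s * e b t * ∏ o : {i : ι // i ≠ a ∧ i ≠ b}, e o.1 (r o) := by
    intro r s t
    exact prod_asmb a b hab (fun i j => e i j) r s t
  simp only [Wit, proj, Matrix.of_apply]
  simp only [key]
  rw [Fintype.sum_prod_type]
  have hone : (∑ r : {i : ι // i ≠ a ∧ i ≠ b} → Fin 2,
      (∏ o : {i : ι // i ≠ a ∧ i ≠ b}, e o.1 (r o)) *
        conj (∏ o : {i : ι // i ≠ a ∧ i ≠ b}, e o.1 (r o))) = 1 := by
    have : ∀ r : {i : ι // i ≠ a ∧ i ≠ b} → Fin 2,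
        (∏ o : {i : ι // i ≠ a ∧ i ≠ b}, e o.1 (r o)) *
          conj (∏ o : {i : ι // i ≠ a ∧ i ≠ b}, e o.1 (r o))
        = ∏ o : {i : ι // i ≠ a ∧ i ≠ b}, (e o.1 (r o) * conj (e o.1 (r o))) := by
      intro r
      rw [map_prod, Finset.prod_mul_distrib]
    simp only [this]
    rw [← Fintype.piFinset_univ, ← Finset.prod_univ_sum
      (t := fun _ : {i : ι // i ≠ a ∧ i ≠ b} => (Finset.univ : Finset (Fin 2)))
      (f := fun o j => e o.1 j * conj (e o.1 j))]
    have : ∀ o : {i : ι // i ≠ a ∧ i ≠ b},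
        (∑ j : Fin 2, e o.1 j * conj (e o.1 j)) = 1 := by
      intro o
      have := he o.1
      simp only [IsUnitQubit] at this
      simp only [Complex.mul_conj]
      rw [← Complex.ofReal_sum, this, Complex.ofReal_one]
    simp [this]
  set Pr : ({i : ι // i ≠ a ∧ i ≠ b} → Fin 2) → ℂ :=
    fun r => ∏ o : {i : ι // i ≠ a ∧ i ≠ b}, e o.1 (r o) with hPr
  have hsum : (∑ r : {i : ι // i ≠ a ∧ i ≠ b} → Fin 2,
      ∑ q : Fin 2 × Fin 2 × Fin 2 × Fin 2,
        ((v q.1 q.2.2.2 * v q.2.2.1 q.2.1 : ℝ) : ℂ) *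
          ((e a q.1 * e b q.2.1 * Pr r) * conj (e a q.2.2.1 * e b q.2.2.2 * Pr r)))
      = (∑ q : Fin 2 × Fin 2 × Fin 2 × Fin 2,
        ((v q.1 q.2.2.2 * v q.2.2.1 q.2.1 : ℝ) : ℂ) *
          (e a q.1 * e b q.2.1 * (conj (e a q.2.2.1) * conj (e b q.2.2.2)))) *
        (∑ r, Pr r * conj (Pr r)) := by
    rw [Finset.sum_mul_sum]
    rw [Finset.sum_comm]
    refine Finset.sum_congr rfl fun r _ => Finset.sum_congr rfl fun q _ => ?_
    simp only [map_mul]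
    ring
  rw [hsum, hone, mul_one, ← Complex.mul_conj]
  simp only [Fintype.sum_prod_type, Fin.sum_univ_two, map_add, map_mul, map_sum,
    Complex.conj_conj, Complex.conj_ofReal]
  push_cast
  ring

/-- The concrete witness weights. -/
def vfun (x y : ℝ) : Fin 2 → Fin 2 → ℝ :=
  fun s t => if s = 0 then (if t = 0 then x else 0) else (if t = 1 then y else 0)

lemma quad_sum_eval (t k : ℕ) (c0 x y : ℝ) :
    (∑ q : Fin 2 × Fin 2 × Fin 2 × Fin 2,
      ((vfun x y q.1 q.2.2.2 * vfun x y q.2.2.1 q.2.1 : ℝ) : ℂ) *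
        ((if t + (q.1 : ℕ) + (q.2.1 : ℕ) = k then ((c0 : ℝ) : ℂ) else 0) *
         (if t + (q.2.2.1 : ℕ) + (q.2.2.2 : ℕ) = k then ((c0 : ℝ) : ℂ) else 0)))
    = ((c0 ^ 2 * ((if t = k then x ^ 2 else 0) + (if t + 1 = k then 2 * x * y else 0)
        + (if t + 2 = k then y ^ 2 else 0)) : ℝ) : ℂ) := by
  simp only [Fintype.sum_prod_type, Fin.sum_univ_two, vfun]
  norm_num
  split_ifs <;> push_cast <;> first
    | ring
    | (exfalso; omega)

end WitAux

lemma sum_merge {N : ℕ} (S : Finset (Fin N)) (x : {i : Fin N // i ∉ S} → Fin 2)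
    (z : {i : Fin N // i ∈ S} → Fin 2) :
    (∑ i, ((mergeCompl S x z i : ℕ)))
      = (∑ j : {i : Fin N // i ∈ S}, ((z j : ℕ))) + ∑ j : {i : Fin N // i ∉ S}, ((x j : ℕ)) := by
  rw [← Finset.sum_add_sum_compl S]
  congr 1
  · rw [Finset.sum_subtype S (fun i => Iff.rfl) (fun i => ((mergeCompl S x z i : ℕ)))]
    refine Finset.sum_congr rfl fun j _ => ?_
    simp [mergeCompl, j.2]
  · rw [Finset.sum_subtype Sᶜ (fun i => Finset.mem_compl) (fun i => ((mergeCompl S x z i : ℕ)))]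
    refine Finset.sum_congr rfl fun j _ => ?_
    have hj : ↑j ∉ S := j.2
    simp [mergeCompl, hj]

set_option maxHeartbeats 2000000 in
/-- For `N ≥ 3` and `1 ≤ k ≤ N − 1`, the entangled symmetric Dicke state
`|D_N^{(k)}⟩` is robust with respect to the loss of any `t ≤ N − 2` qubits: for every subset
`S` of the qubits with `|S| ≤ N − 2`, the reduced density operator obtained by tracing out the
qubits in `S` is entangled. -/
theorem dicke_robust {N k : ℕ} (hN : 3 ≤ N) (hk1 : 1 ≤ k) (hk2 : k ≤ N - 1) :
    ∀ S : Finset (Fin N), S.card ≤ N - 2 →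
      ¬ IsSeparableDensity (reducedState (dicke N k) S) := by
  intro S hS hsep
  have hSN : S.card ≤ N := le_trans (Finset.card_le_univ S) (by simp)
  -- two qubits outside S
  have hcardι : Fintype.card {i : Fin N // i ∉ S} = N - S.card := by
    rw [Fintype.card_subtype]
    have : Finset.univ.filter (fun i : Fin N => i ∉ S) = Sᶜ := by
      ext i; simp
    rw [this, Finset.card_compl, Fintype.card_fin]
  obtain ⟨a, b, hab⟩ : ∃ a b : {i : Fin N // i ∉ S}, a ≠ b := by
    apply Fintype.exists_pair_of_one_lt_card
    omega
  -- the three binomial counts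
  set A : ℕ := (N-2).choose k with hA
  set B : ℕ := (N-2).choose (k-1) with hB
  set CC : ℕ := if 2 ≤ k then (N-2).choose (k-2) else 0 with hCC
  set x : ℝ := (B : ℝ) + CC with hx
  set y : ℝ := -((A : ℝ) + B) with hy
  set c0 : ℝ := 1 / Real.sqrt (N.choose k) with hc0
  set v : Fin 2 → Fin 2 → ℝ := vfun x y with hv
  -- cardinality of the remaining register
  have hOcard : Fintype.card {i : {i : Fin N // i ∉ S} // i ≠ a ∧ i ≠ b} = N - S.card - 2 := by
    rw [Fintype.card_subtype]
    have h1 : (Finset.univ.filter fun i : {i : Fin N // i ∉ S} => i ≠ a ∧ i ≠ b)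
        = (Finset.univ.erase a).erase b := by
      ext i; simp [Finset.mem_erase, and_comm]
    rw [h1, Finset.card_erase_of_mem (Finset.mem_erase.2 ⟨Ne.symm hab, Finset.mem_univ b⟩),
      Finset.card_erase_of_mem (Finset.mem_univ a), Finset.card_univ, hcardι]
    omega
  -- the count of configurations with m excitations among the N-2 traced/other qubits
  have hcount : ∀ m : ℕ,
      ((Finset.univ.filter fun p :
          ({i : {i : Fin N // i ∉ S} // i ≠ a ∧ i ≠ b} → Fin 2) × ({i : Fin N // i ∈ S} → Fin 2) =>
        ((∑ o, ((p.1 o : ℕ))) + ∑ j, ((p.2 j : ℕ))) = m).card) = (N-2).choose m := by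
    intro m
    have hZcard : Fintype.card {i : Fin N // i ∈ S} = S.card := Fintype.card_coe S
    set O := {i : {i : Fin N // i ∉ S} // i ≠ a ∧ i ≠ b}
    set Z := {i : Fin N // i ∈ S}
    have Ecard : Fintype.card (O ⊕ Z) = N - 2 := by
      rw [Fintype.card_sum, hOcard, hZcard]; omega
    have key := card_filter_sum (O ⊕ Z) m
    rw [Ecard] at key
    rw [← key]
    apply Finset.card_equiv (Equiv.sumArrowEquivProdArrow O Z (Fin 2)).symm
    intro p
    simp only [Finset.mem_filter, Finset.mem_univ, true_and,
      Equiv.sumArrowEquivProdArrow, Equiv.coe_fn_symm_mk]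
    rw [Fintype.sum_sum_type]
    exact Iff.rfl
  -- main computation of the witness value on the reduced Dicke state
  have hW : Wit a b v (reducedState (dicke N k) S)
      = ((c0^2 * ((A : ℝ) * x^2 + (B : ℝ) * (2*x*y) + (CC : ℝ) * y^2) : ℝ) : ℂ) := by
    have hdicke : ∀ (r : {i : {i : Fin N // i ∉ S} // i ≠ a ∧ i ≠ b} → Fin 2) (s t : Fin 2)
        (z : {i : Fin N // i ∈ S} → Fin 2),
        dicke N k (mergeCompl S (asmb a b r s t) z)
          = if ((∑ o, ((r o : ℕ))) + ∑ j, ((z j : ℕ))) + (s : ℕ) + (t : ℕ) = k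
            then ((c0 : ℝ) : ℂ) else 0 := by
      intro r s t z
      rw [dicke, sum_merge, sum_asmb a b hab (fun _ j => (j : ℕ)) r s t, hc0]
      exact if_congr (by omega) rfl rfl
    have step1 : Wit a b v (reducedState (dicke N k) S)
        = ∑ r : {i : {i : Fin N // i ∉ S} // i ≠ a ∧ i ≠ b} → Fin 2,
            ∑ z : {i : Fin N // i ∈ S} → Fin 2,
            ((c0^2 * ((if ((∑ o, ((r o : ℕ))) + ∑ j, ((z j : ℕ))) = k then x^2 else 0)
              + (if ((∑ o, ((r o : ℕ))) + ∑ j, ((z j : ℕ))) + 1 = k then 2*x*y else 0)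
              + (if ((∑ o, ((r o : ℕ))) + ∑ j, ((z j : ℕ))) + 2 = k then y^2 else 0)) : ℝ) : ℂ) := by
      rw [Wit]
      simp only [reducedState, Matrix.of_apply, hdicke, apply_ite (starRingEnd ℂ),
        Complex.conj_ofReal, map_zero, Finset.mul_sum]
      rw [Fintype.sum_prod_type]
      refine Finset.sum_congr rfl fun r _ => ?_
      rw [Finset.sum_comm]
      refine Finset.sum_congr rfl fun z _ => ?_
      rw [hv]
      exact quad_sum_eval ((∑ o, ((r o : ℕ))) + ∑ j, ((z j : ℕ))) k c0 x y
    rw [step1]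
    have coll : ∀ (F : ({i : {i : Fin N // i ∉ S} // i ≠ a ∧ i ≠ b} → Fin 2)
        → ({i : Fin N // i ∈ S} → Fin 2) → ℝ),
        (∑ r, ∑ z, ((F r z : ℝ) : ℂ)) = ((∑ r, ∑ z, F r z : ℝ) : ℂ) := by
      intro F; push_cast; rfl
    rw [coll]
    congr 1
    simp only [← Finset.mul_sum]
    congr 1
    rw [← Finset.sum_product']
    rw [Finset.univ_product_univ]
    rw [Finset.sum_add_distrib, Finset.sum_add_distrib]
    simp only [← Finset.sum_filter, Finset.sum_const, nsmul_eq_mul]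
    have e1 : (Finset.univ.filter fun p :
          ({i : {i : Fin N // i ∉ S} // i ≠ a ∧ i ≠ b} → Fin 2) × ({i : Fin N // i ∈ S} → Fin 2) =>
        ((∑ o, ((p.1 o : ℕ))) + ∑ j, ((p.2 j : ℕ))) + 1 = k)
        = (Finset.univ.filter fun p :
          ({i : {i : Fin N // i ∉ S} // i ≠ a ∧ i ≠ b} → Fin 2) × ({i : Fin N // i ∈ S} → Fin 2) =>
        ((∑ o, ((p.1 o : ℕ))) + ∑ j, ((p.2 j : ℕ))) = k - 1) :=
      Finset.filter_congr fun p _ => by omega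
    rw [e1, hcount k, hcount (k-1), ← hA, ← hB]
    rcases le_or_gt 2 k with h2 | h2
    · have e2 : (Finset.univ.filter fun p :
            ({i : {i : Fin N // i ∉ S} // i ≠ a ∧ i ≠ b} → Fin 2) × ({i : Fin N // i ∈ S} → Fin 2) =>
          ((∑ o, ((p.1 o : ℕ))) + ∑ j, ((p.2 j : ℕ))) + 2 = k)
          = (Finset.univ.filter fun p :
            ({i : {i : Fin N // i ∉ S} // i ≠ a ∧ i ≠ b} → Fin 2) × ({i : Fin N // i ∈ S} → Fin 2) =>
          ((∑ o, ((p.1 o : ℕ))) + ∑ j, ((p.2 j : ℕ))) = k - 2) :=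
        Finset.filter_congr fun p _ => by omega
      rw [e2, hcount (k-2), hCC, if_pos h2]
    · have e2 : (Finset.univ.filter fun p :
            ({i : {i : Fin N // i ∉ S} // i ≠ a ∧ i ≠ b} → Fin 2) × ({i : Fin N // i ∈ S} → Fin 2) =>
          ((∑ o, ((p.1 o : ℕ))) + ∑ j, ((p.2 j : ℕ))) + 2 = k) = ∅ :=
        Finset.filter_false_of_mem fun p _ => by omega
      rw [e2, hCC, if_neg (by omega), Finset.card_empty]
  -- the witness value is negative
  have hBpos : 0 < B := Nat.choose_pos (by omega)
  have hABC : A * CC < B^2 := by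
    rcases lt_or_ge k 2 with h2 | h2
    · rw [hCC, if_neg (by omega), mul_zero]
      exact pow_pos hBpos 2
    · rcases le_or_gt k (N-2) with hk | hk
      · have hl := choose_logconcave (n := N-2) (i := k-2) (by omega)
        have e1 : k-2+2 = k := by omega
        have e2 : k-2+1 = k-1 := by omega
        rw [e1, e2] at hl
        rw [hA, hB, hCC, if_pos h2]
        exact hl
      · rw [hA, Nat.choose_eq_zero_of_lt (by omega), zero_mul]
        exact pow_pos hBpos 2
  have hneg : c0^2 * ((A : ℝ) * x^2 + (B : ℝ) * (2*x*y) + (CC : ℝ) * y^2) < 0 := by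
    have hc0pos : 0 < c0 := by
      rw [hc0]
      have : (0:ℝ) < Real.sqrt (N.choose k) := by
        apply Real.sqrt_pos.2
        exact_mod_cast Nat.choose_pos (by omega)
      positivity
    have hfact : (A : ℝ) * x^2 + (B : ℝ) * (2*x*y) + (CC : ℝ) * y^2
        = ((A:ℝ)*CC - (B:ℝ)^2) * ((A:ℝ) + 2*B + CC) := by
      rw [hx, hy]; ring
    have h1 : (A:ℝ)*CC - (B:ℝ)^2 < 0 := by
      have : (A:ℝ)*CC < (B:ℝ)^2 := by exact_mod_cast hABC
      linarith
    have h2 : (0:ℝ) < (A:ℝ) + 2*B + CC := by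
      have : (1:ℝ) ≤ B := by exact_mod_cast hBpos
      positivity
    rw [hfact]
    have := mul_neg_of_neg_of_pos h1 h2
    exact mul_neg_of_pos_of_neg (pow_pos hc0pos 2) this
  -- but separability forces it to be nonnegative
  obtain ⟨n, w, e, hw, -, he, hrho⟩ := hsep
  have hpos : Wit a b v (reducedState (dicke N k) S)
      = ((∑ m, w m * Complex.normSq (∑ s : Fin 2, ∑ δ : Fin 2,
          (v s δ : ℂ) * e m a s * conj (e m b δ)) : ℝ) : ℂ) := by
    rw [hrho, Wit_sum]
    push_cast
    exact Finset.sum_congr rfl fun m _ => by rw [Wit_proj_prod a b hab v (e m) (he m)]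
  rw [hW] at hpos
  have := Complex.ofReal_inj.mp hpos
  have hge : 0 ≤ ∑ m, w m * Complex.normSq (∑ s : Fin 2, ∑ δ : Fin 2,
      (v s δ : ℂ) * e m a s * conj (e m b δ)) :=
    Finset.sum_nonneg fun m _ => mul_nonneg (hw m) (Complex.normSq_nonneg _)
  linarith
end
end
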